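/- arXiv:1510.03405 — 9 statements merged into one kernel-verified Lean document; each statement's English description precedes it below -/
import Mathlib

section
/- There exists a constant C₀ > 0, independent of q and R, such that for all integers R ≥ 1 and q ≥ 1 one has (1/q!) · Σ_{n=2}^{q+1} ((C₀R)^{-n}/n!) · Σ_{(I_1,…,I_n) ∈ 𝒮(R,q,n)} Π_{j=1}^{n} (|I_j|/R − 1)! ≤ 1. -/
open scoped BigOperators Nat Classical

/-- The set `𝒮(R,q,n)` of sequences `(I_1, …, I_n)` of nonempty discrete intervals of
positive integers such that: each `|I_j|` is a positive multiple of `R`; for `j > 1` the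
interval `I_j` intersects the union of the previous ones; the cardinalities sum to
`R(q+1)`; and the minimum of the union is `1`. -/
noncomputable def intervalSeqs (R q n : ℕ) : Finset (Fin n → Finset ℕ) :=
  (Fintype.piFinset fun _ : Fin n => (Finset.Icc 1 (R * (q + 1))).powerset).filter
    fun I =>
      (∀ j, ∃ a b : ℕ, 1 ≤ a ∧ a ≤ b ∧ I j = Finset.Icc a b) ∧
      (∀ j, ∃ k : ℕ, 1 ≤ k ∧ (I j).card = R * k) ∧
      (∀ j : Fin n, 0 < (j : ℕ) →
        (I j ∩ (Finset.univ.filter fun i : Fin n => (i : ℕ) < (j : ℕ)).biUnion I).Nonempty) ∧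
      (∑ j, (I j).card = R * (q + 1)) ∧
      (1 ∈ Finset.univ.biUnion I)

/-!
An interval sequence in `𝒮(R,q,n)` is determined by the left endpoints of its intervals, which
lie in `[1, R(q+1)]` and one of which is `1`, together with the numbers `m_j = |I_j|/R - 1`,
which sum to `q + 1 - n`. There are at most `n (R(q+1))^(n-1)` such endpoint tuples, and
`∑_{m_1+⋯+m_n = M} ∏ m_j! ≤ 3^n M!` because `∑_{a+b=M} a! b! ≤ 3 M!`. Since
`q^m ≤ m! · q(q-1)⋯(q-m+1)`, the inner sum for `n` is at most `n! q! (6R)^n`, so with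
`C₀ = 12` the `n`-th term is at most `q! 2^(-n)`.
-/

open Finset

namespace Nat

theorem succ_factorial_mul_succ_factorial_le (a b : ℕ) :
    (a + 1)! * (b + 1)! ≤ (a + b + 1)! := by
  induction b with
  | zero => simp
  | succ b ih =>
    calc (a + 1)! * (b + 2)! = (b + 2) * ((a + 1)! * (b + 1)!) := by
          rw [factorial_succ (b + 1)]; ring
      _ ≤ (a + b + 2) * (a + b + 1)! := Nat.mul_le_mul (by omega) ih
      _ = (a + (b + 1) + 1)! := (factorial_succ (a + b + 1)).symm

theorem sum_antidiagonal_factorial_mul_factorial_le (M : ℕ) :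
    ∑ p ∈ antidiagonal M, p.1 ! * p.2 ! ≤ 3 * M ! := by
  match M with
  | 0 => simp
  | 1 => decide
  | M + 2 =>
    rw [Nat.sum_antidiagonal_succ, Nat.sum_antidiagonal_succ']
    have hmiddle : ∑ p ∈ antidiagonal M, (p.1 + 1)! * (p.2 + 1)! ≤ (M + 1) * (M + 1)! := by
      calc ∑ p ∈ antidiagonal M, (p.1 + 1)! * (p.2 + 1)!
          ≤ ∑ _p ∈ antidiagonal M, (M + 1)! := sum_le_sum fun p hp => by
            rw [← mem_antidiagonal.mp hp]; exact succ_factorial_mul_succ_factorial_le _ _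
        _ = (M + 1) * (M + 1)! := by simp
    have hstep : (M + 1) * (M + 1)! ≤ (M + 2)! :=
      (Nat.mul_le_mul_right _ (by omega)).trans_eq (factorial_succ (M + 1)).symm
    simp only [factorial_zero, one_mul, mul_one]
    rw [show M + 1 + 1 = M + 2 by rfl]
    omega

theorem pow_le_factorial_mul_descFactorial {m q : ℕ} (h : m ≤ q) :
    q ^ m ≤ m ! * q.descFactorial m := by
  induction m with
  | zero => simp
  | succ m ih =>
    obtain ⟨d, rfl⟩ : ∃ d, q = m + 1 + d := ⟨q - (m + 1), by omega⟩
    rw [pow_succ, descFactorial_succ, factorial_succ,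
      show m + 1 + d - m = d + 1 by omega]
    calc (m + 1 + d) ^ m * (m + 1 + d)
        ≤ m ! * (m + 1 + d).descFactorial m * ((m + 1) * (d + 1)) :=
          Nat.mul_le_mul (ih (by omega)) (by nlinarith)
      _ = (m + 1) * m ! * ((d + 1) * (m + 1 + d).descFactorial m) := by ring

theorem succ_pow_mul_factorial_sub_le {m q : ℕ} (h : m ≤ q) :
    (q + 1) ^ m * (q - m)! ≤ 2 ^ m * m ! * q ! := by
  have hpow : (q + 1) ^ m ≤ 2 ^ m * q ^ m := by
    rcases Nat.eq_zero_or_pos m with rfl | hm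
    · simp
    · rw [← mul_pow]; exact Nat.pow_le_pow_left (by omega) m
  calc (q + 1) ^ m * (q - m)! ≤ 2 ^ m * (m ! * q.descFactorial m) * (q - m)! :=
        Nat.mul_le_mul_right _
          (hpow.trans (Nat.mul_le_mul_left _ (pow_le_factorial_mul_descFactorial h)))
    _ = 2 ^ m * m ! * ((q - m)! * q.descFactorial m) := by ring
    _ = 2 ^ m * m ! * q ! := by rw [factorial_mul_descFactorial h]

end Nat

theorem Finset.sum_piAntidiag_prod_factorial_le {ι : Type*} [DecidableEq ι] (s : Finset ι)
    (M : ℕ) : ∑ f ∈ s.piAntidiag M, ∏ i ∈ s, (f i)! ≤ 3 ^ #s * M ! := by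
  induction s using Finset.cons_induction generalizing M with
  | empty => cases M <;> simp
  | cons i s hi ih =>
    rw [piAntidiag_cons hi, sum_disjiUnion]
    calc ∑ p ∈ antidiagonal M, ∑ f ∈ (s.piAntidiag p.2).map
            (addRightEmbedding fun t => if t = i then p.1 else 0), ∏ j ∈ cons i s hi, (f j)!
        = ∑ p ∈ antidiagonal M, p.1 ! * ∑ g ∈ s.piAntidiag p.2, ∏ j ∈ s, (g j)! := by
          refine sum_congr rfl fun p _ => ?_
          rw [sum_map, mul_sum]
          refine sum_congr rfl fun g hg => ?_
          have hgi : g i = 0 := by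
            by_contra h
            exact hi ((mem_piAntidiag.mp hg).2 i h)
          rw [prod_cons]
          congr 1
          · simp [hgi]
          · refine prod_congr rfl fun j hj => ?_
            simp [show j ≠ i from fun h => hi (h ▸ hj)]
      _ ≤ ∑ p ∈ antidiagonal M, p.1 ! * (3 ^ #s * p.2 !) := by gcongr with p; exact ih _
      _ = 3 ^ #s * ∑ p ∈ antidiagonal M, p.1 ! * p.2 ! := by
          rw [mul_sum]; exact sum_congr rfl fun p _ => by ring
      _ ≤ 3 ^ #s * (3 * M !) := by gcongr; exact Nat.sum_antidiagonal_factorial_mul_factorial_le M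
      _ = 3 ^ #(cons i s hi) * M ! := by rw [card_cons, pow_succ]; ring

theorem Finset.card_biUnion_piFinset_update_singleton_le {ι α : Type*} [Fintype ι]
    [DecidableEq ι] [DecidableEq α] (t : Finset α) (a : α) :
    #(univ.biUnion fun i => Fintype.piFinset (Function.update (fun _ : ι => t) i {a})) ≤
      Fintype.card ι * #t ^ (Fintype.card ι - 1) := by
  refine card_biUnion_le.trans (le_of_eq ?_)
  rw [← smul_eq_mul, ← card_univ, ← sum_const]
  refine sum_congr rfl fun i _ => ?_
  rw [Fintype.card_piFinset, ← prod_congr rfl fun j _ =>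
    (Function.apply_update (fun _ => card) _ i {a} j).symm, prod_update_of_mem (mem_univ i)]
  simp [card_sdiff]

def startLengthIntervals (R : ℕ) {n : ℕ} (a m : Fin n → ℕ) (j : Fin n) : Finset ℕ :=
  Icc (a j) (a j + R * (m j + 1) - 1)

theorem card_startLengthIntervals {R n : ℕ} (hR : 0 < R) (a m : Fin n → ℕ) (j : Fin n) :
    #(startLengthIntervals R a m j) = R * (m j + 1) := by
  have : 0 < R * (m j + 1) := Nat.mul_pos hR (Nat.succ_pos _)
  rw [startLengthIntervals, Nat.card_Icc]
  omega

theorem intervalSeqs_subset_image {R q n : ℕ} (hR : 0 < R) :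
    intervalSeqs R q n ⊆
      ((univ.biUnion fun j₀ => Fintype.piFinset
          (Function.update (fun _ : Fin n => Icc 1 (R * (q + 1))) j₀ {1})) ×ˢ
        univ.piAntidiag (q + 1 - n)).image fun x => startLengthIntervals R x.1 x.2 := by
  intro I hI
  obtain ⟨hsub, hint, hmul, -, hsum, hone⟩ := mem_filter.mp hI
  choose a b ha hab hIab using hint
  choose k hk hcard using hmul
  have hb : ∀ j, b j = a j + R * (k j - 1 + 1) - 1 := fun j => by
    have hc := hcard j
    rw [hIab j, Nat.card_Icc] at hc
    have := hab j
    rw [Nat.sub_add_cancel (hk j)]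
    omega
  have hmem : ∀ j, a j ∈ I j := fun j => by rw [hIab j]; exact left_mem_Icc.mpr (hab j)
  obtain ⟨j₀, -, h1⟩ := mem_biUnion.mp hone
  rw [hIab j₀, mem_Icc] at h1
  refine mem_image.mpr ⟨(a, fun j => k j - 1), mem_product.mpr ⟨?_, ?_⟩, ?_⟩
  · refine mem_biUnion.mpr ⟨j₀, mem_univ _, Fintype.mem_piFinset.mpr fun j => ?_⟩
    rcases eq_or_ne j j₀ with rfl | hj
    · simp only [Function.update_self, mem_singleton]; exact le_antisymm h1.1 (ha j)
    · rw [Function.update_of_ne hj]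
      exact mem_powerset.mp (Fintype.mem_piFinset.mp hsub j) (hmem j)
  · have hksum : ∑ j, k j = q + 1 :=
      Nat.eq_of_mul_eq_mul_left hR <| by
        rw [mul_sum, ← hsum]; exact sum_congr rfl fun j _ => (hcard j).symm
    have : ∑ j, k j = ∑ j, (k j - 1) + n := calc
      ∑ j, k j = ∑ j, (k j - 1 + 1) := sum_congr rfl fun j _ => (Nat.sub_add_cancel (hk j)).symm
      _ = ∑ j, (k j - 1) + n := by simp [sum_add_distrib]
    simp only [mem_piAntidiag, mem_univ, implies_true, and_true]
    omega
  · funext j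
    rw [startLengthIntervals, hIab j, hb j]

theorem sum_intervalSeqs_prod_factorial_le {R q n : ℕ} (hR : 0 < R) :
    ∑ I ∈ intervalSeqs R q n, ∏ j, (#(I j) / R - 1)! ≤
      n * (R * (q + 1)) ^ (n - 1) * (3 ^ n * (q + 1 - n)!) := by
  set A := univ.biUnion fun j₀ => Fintype.piFinset
    (Function.update (fun _ : Fin n => Icc 1 (R * (q + 1))) j₀ {1})
  set P := (univ : Finset (Fin n)).piAntidiag (q + 1 - n)
  have hweight : ∀ m : Fin n → ℕ, ∀ a, ∏ j, (#(startLengthIntervals R a m j) / R - 1)! =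
      ∏ j, (m j)! := fun m a => by
    simp only [card_startLengthIntervals hR, Nat.mul_div_cancel_left _ hR, Nat.add_sub_cancel]
  have hA : #A ≤ n * (R * (q + 1)) ^ (n - 1) := by
    simpa using card_biUnion_piFinset_update_singleton_le (ι := Fin n) (Icc 1 (R * (q + 1))) 1
  calc ∑ I ∈ intervalSeqs R q n, ∏ j, (#(I j) / R - 1)!
      ≤ ∑ I ∈ (A ×ˢ P).image (fun x => startLengthIntervals R x.1 x.2),
          ∏ j, (#(I j) / R - 1)! :=
        sum_le_sum_of_subset (intervalSeqs_subset_image hR)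
    _ ≤ ∑ x ∈ A ×ˢ P, ∏ j, (#(startLengthIntervals R x.1 x.2 j) / R - 1)! :=
        sum_image_le_of_nonneg fun _ _ => Nat.zero_le _
    _ = #A * ∑ m ∈ P, ∏ j, (m j)! := by
        simp only [sum_product, hweight, sum_const, smul_eq_mul]
    _ ≤ n * (R * (q + 1)) ^ (n - 1) * (3 ^ n * (q + 1 - n)!) :=
        Nat.mul_le_mul hA <| by
          simpa using sum_piAntidiag_prod_factorial_le (univ : Finset (Fin n)) (q + 1 - n)

theorem sum_intervalSeqs_prod_factorial_le_factorial_mul {R q n : ℕ} (hR : 0 < R) (hn : 1 ≤ n)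
    (hnq : n ≤ q + 1) :
    ∑ I ∈ intervalSeqs R q n, ∏ j, (#(I j) / R - 1)! ≤ n ! * q ! * (6 * R) ^ n := by
  refine (sum_intervalSeqs_prod_factorial_le hR).trans ?_
  obtain ⟨m, rfl⟩ : ∃ m, n = m + 1 := ⟨n - 1, by omega⟩
  rw [Nat.add_sub_cancel, show q + 1 - (m + 1) = q - m by omega]
  calc (m + 1) * (R * (q + 1)) ^ m * (3 ^ (m + 1) * (q - m)!)
      = (m + 1) * R ^ m * 3 ^ (m + 1) * ((q + 1) ^ m * (q - m)!) := by rw [mul_pow]; ring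
    _ ≤ (m + 1) * R ^ m * 3 ^ (m + 1) * (2 ^ m * m ! * q !) :=
        Nat.mul_le_mul_left _ (Nat.succ_pow_mul_factorial_sub_le (by omega))
    _ = (m + 1) * m ! * q ! * (3 ^ (m + 1) * 2 ^ m) * R ^ m := by ring
    _ ≤ (m + 1) * m ! * q ! * (3 ^ (m + 1) * 2 ^ (m + 1)) * R ^ (m + 1) := by
        gcongr <;> omega
    _ = (m + 1)! * q ! * (6 * R) ^ (m + 1) := by
        rw [Nat.factorial_succ, mul_pow, show 6 = 3 * 2 by rfl, mul_pow]
        ring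

/-- Lemma 1 of the paper: there is a constant `C₀ > 0`, independent of `q`
and `R`, such that for all integers `R ≥ 1` and `q ≥ 1`,
`(1/q!) Σ_{n=2}^{q+1} ((C₀R)^{-n}/n!) Σ_{(I_j) ∈ 𝒮(R,q,n)} Π_j (|I_j|/R − 1)! ≤ 1`. -/
theorem interval_sum_lemma :
    ∃ C₀ : ℝ, 0 < C₀ ∧ ∀ R q : ℕ, 1 ≤ R → 1 ≤ q →
      (1 / (q ! : ℝ)) *
        ∑ n ∈ Finset.Icc 2 (q + 1),
          (((C₀ * (R : ℝ)) ^ n)⁻¹ / (n ! : ℝ)) *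
            ∑ I ∈ intervalSeqs R q n, ∏ j : Fin n, (((I j).card / R - 1)! : ℝ) ≤ 1 := by
  refine ⟨12, by norm_num, fun R q hR _ => ?_⟩
  have hterm : ∀ n ∈ Icc 2 (q + 1), ((12 * (R : ℝ)) ^ n)⁻¹ / (n ! : ℝ) *
      ∑ I ∈ intervalSeqs R q n, ∏ j : Fin n, (((I j).card / R - 1)! : ℝ) ≤
        q ! * (1 / 2) ^ n := by
    intro n hn
    rw [mem_Icc] at hn
    have hbound : ∑ I ∈ intervalSeqs R q n, ∏ j : Fin n, (((I j).card / R - 1)! : ℝ) ≤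
        n ! * q ! * (6 * R) ^ n := by
      exact_mod_cast sum_intervalSeqs_prod_factorial_le_factorial_mul hR (by omega) hn.2
    calc _ ≤ ((12 * (R : ℝ)) ^ n)⁻¹ / (n ! : ℝ) * (n ! * q ! * (6 * R) ^ n) := by gcongr
      _ = q ! * (1 / 2) ^ n := by
        have hR0 : (R : ℝ) ≠ 0 := by positivity
        rw [mul_pow, mul_pow, show (12 : ℝ) = 2 * 6 by norm_num, mul_pow, one_div, inv_pow]
        field_simp
  calc _ ≤ 1 / (q ! : ℝ) * ∑ n ∈ Icc 2 (q + 1), q ! * (1 / 2 : ℝ) ^ n :=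
        mul_le_mul_of_nonneg_left (sum_le_sum hterm) (by positivity)
    _ = ∑ n ∈ Ico 2 (q + 2), (1 / 2 : ℝ) ^ n := by
        rw [← mul_sum, ← mul_assoc, one_div_mul_cancel (by positivity), one_mul]; rfl
    _ ≤ (1 / 2) ^ 2 / (1 - 1 / 2) := geom_sum_Ico_le_of_lt_one (by norm_num) (by norm_num)
    _ ≤ 1 := by norm_num
end

section
/- For every real α with 1/2 < α < 1 there exists a constant C = C(α) > 0 such that for every integer L ≥ 1: Σ_{x=1}^{⌈αL⌉} (x/L)^{x − 1/2} ≤ C · L^{−1/2}. -/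
open scoped BigOperators

lemma aux_geom_sum_bound (β : ℝ) (h0 : 0 ≤ β) (h1 : β < 1) (n : ℕ) :
    ∑ k ∈ Finset.range n, ((k : ℝ) + 1) * β ^ k ≤ ((1 - β) ^ 2)⁻¹ := by
  have hβ1 : (1 : ℝ) - β ≠ 0 := by linarith
  have hs1 : HasSum (fun k : ℕ => (k : ℝ) * β ^ k) (β / (1 - β) ^ 2) :=
    hasSum_coe_mul_geometric_of_norm_lt_one
      (by rwa [Real.norm_eq_abs, abs_of_nonneg h0])
  have hs2 : HasSum (fun k : ℕ => β ^ k) (1 - β)⁻¹ :=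
    hasSum_geometric_of_lt_one h0 h1
  have hs : HasSum (fun k : ℕ => ((k : ℝ) + 1) * β ^ k)
      (β / (1 - β) ^ 2 + (1 - β)⁻¹) := by
    simpa [add_mul, one_mul] using hs1.add hs2
  have hval : β / (1 - β) ^ 2 + (1 - β)⁻¹ = ((1 - β) ^ 2)⁻¹ := by
    field_simp
    ring
  rw [← hval]
  exact sum_le_hasSum _ (fun k _ => by positivity) hs

/-- For every real `α` with `1/2 < α < 1` there exists `C = C(α) > 0`
such that for every integer `L ≥ 1`,
`∑_{x=1}^{⌈αL⌉} (x/L)^(x - 1/2) ≤ C · L^(-1/2)`, with real powers. -/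
theorem sum_ratio_rpow_short_intervals (α : ℝ) (hα₁ : 1 / 2 < α) (hα₂ : α < 1) :
    ∃ C : ℝ, 0 < C ∧ ∀ L : ℕ, 1 ≤ L →
      ∑ x ∈ Finset.Icc 1 ⌈α * (L : ℝ)⌉₊, ((x : ℝ) / (L : ℝ)) ^ ((x : ℝ) - 1 / 2)
        ≤ C * (L : ℝ) ^ (-(1 / 2) : ℝ) := by
  have hα0 : 0 < α := by linarith
  set β : ℝ := (α + 1) / 2 with hβdef
  have hβ0 : 0 < β := by rw [hβdef]; linarith
  have hβ1 : β < 1 := by rw [hβdef]; linarith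
  set L₀ : ℕ := ⌈(2 : ℝ) / (1 - α)⌉₊ with hL₀def
  refine ⟨max (((1 - β) ^ 2)⁻¹) ((L₀ : ℝ) ^ 2) + 1, by positivity, ?_⟩
  intro L hL
  have hL0 : (0 : ℝ) < L := by exact_mod_cast hL
  have hL1 : (1 : ℝ) ≤ L := by exact_mod_cast hL
  have hLhalf : (0 : ℝ) < (L : ℝ) ^ ((1 : ℝ) / 2) := Real.rpow_pos_of_pos hL0 _
  have hLneg : ((L : ℝ) : ℝ) ^ (-(1 / 2) : ℝ) = ((L : ℝ) ^ ((1 : ℝ) / 2))⁻¹ := by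
    rw [← Real.rpow_neg hL0.le]
  by_cases hcase : L₀ ≤ L
  · -- large L
    have hLge : (2 : ℝ) / (1 - α) ≤ L :=
      le_trans (Nat.le_ceil _) (by exact_mod_cast hcase)
    have h1α : (0 : ℝ) < 1 - α := by linarith
    have h2L : (2 : ℝ) ≤ (L : ℝ) * (1 - α) := by
      rw [div_le_iff₀ h1α] at hLge; linarith
    have hinv : (1 : ℝ) / L ≤ (1 - α) / 2 := by
      rw [div_le_div_iff₀ hL0 (by norm_num)]
      nlinarith
    have hratio : ∀ x ∈ Finset.Icc 1 ⌈α * (L : ℝ)⌉₊, (x : ℝ) / L ≤ β := by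
      intro x hx
      rw [Finset.mem_Icc] at hx
      have hxle : (x : ℝ) ≤ α * L + 1 := by
        have h1 : (x : ℝ) ≤ (⌈α * (L : ℝ)⌉₊ : ℝ) := by exact_mod_cast hx.2
        have h2 : (⌈α * (L : ℝ)⌉₊ : ℝ) < α * L + 1 :=
          Nat.ceil_lt_add_one (by positivity)
        linarith
      rw [div_le_iff₀ hL0]
      have : α * L + 1 ≤ β * L := by rw [hβdef]; nlinarith
      linarith
    -- bound each term
    have hterm : ∀ x ∈ Finset.Icc 1 ⌈α * (L : ℝ)⌉₊,
        ((x : ℝ) / L) ^ ((x : ℝ) - 1 / 2)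
          ≤ ((x : ℝ) * β ^ (x - 1)) * ((L : ℝ) ^ ((1 : ℝ) / 2))⁻¹ := by
      intro x hx
      have hx1 : 1 ≤ x := (Finset.mem_Icc.mp hx).1
      have hx1r : (1 : ℝ) ≤ (x : ℝ) := by exact_mod_cast hx1
      have hr0 : (0 : ℝ) < (x : ℝ) / L := by positivity
      have hsplit : ((x : ℝ) / L) ^ ((x : ℝ) - 1 / 2)
          = ((x : ℝ) / L) ^ ((1 : ℝ) / 2) * ((x : ℝ) / L) ^ ((x : ℝ) - 1) := by
        rw [← Real.rpow_add hr0]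
        congr 1
        ring
      rw [hsplit]
      have h1 : ((x : ℝ) / L) ^ ((1 : ℝ) / 2)
          = (x : ℝ) ^ ((1 : ℝ) / 2) * ((L : ℝ) ^ ((1 : ℝ) / 2))⁻¹ := by
        rw [Real.div_rpow (by positivity) hL0.le, div_eq_mul_inv]
      have h2 : (x : ℝ) ^ ((1 : ℝ) / 2) ≤ (x : ℝ) := by
        calc (x : ℝ) ^ ((1 : ℝ) / 2) ≤ (x : ℝ) ^ (1 : ℝ) :=
              Real.rpow_le_rpow_of_exponent_le hx1r (by norm_num)
          _ = (x : ℝ) := Real.rpow_one _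
      have h3 : ((x : ℝ) / L) ^ ((x : ℝ) - 1) ≤ β ^ (x - 1) := by
        have hc : ((x : ℝ) - 1) = ((x - 1 : ℕ) : ℝ) := by
          rw [Nat.cast_sub hx1]; norm_num
        calc ((x : ℝ) / L) ^ ((x : ℝ) - 1)
            ≤ β ^ ((x : ℝ) - 1) :=
              Real.rpow_le_rpow hr0.le (hratio x hx) (by linarith)
          _ = β ^ (x - 1) := by rw [hc, Real.rpow_natCast]
      calc ((x : ℝ) / L) ^ ((1 : ℝ) / 2) * ((x : ℝ) / L) ^ ((x : ℝ) - 1)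
          ≤ ((x : ℝ) * ((L : ℝ) ^ ((1 : ℝ) / 2))⁻¹) * β ^ (x - 1) := by
            rw [h1]
            apply mul_le_mul _ h3 (by positivity) (by positivity)
            exact mul_le_mul_of_nonneg_right h2 (by positivity)
        _ = ((x : ℝ) * β ^ (x - 1)) * ((L : ℝ) ^ ((1 : ℝ) / 2))⁻¹ := by ring
    calc ∑ x ∈ Finset.Icc 1 ⌈α * (L : ℝ)⌉₊, ((x : ℝ) / L) ^ ((x : ℝ) - 1 / 2)
        ≤ ∑ x ∈ Finset.Icc 1 ⌈α * (L : ℝ)⌉₊,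
            ((x : ℝ) * β ^ (x - 1)) * ((L : ℝ) ^ ((1 : ℝ) / 2))⁻¹ :=
          Finset.sum_le_sum hterm
      _ = (∑ x ∈ Finset.Icc 1 ⌈α * (L : ℝ)⌉₊, (x : ℝ) * β ^ (x - 1))
            * ((L : ℝ) ^ ((1 : ℝ) / 2))⁻¹ := by rw [← Finset.sum_mul]
      _ ≤ ((1 - β) ^ 2)⁻¹ * ((L : ℝ) ^ ((1 : ℝ) / 2))⁻¹ := by
          apply mul_le_mul_of_nonneg_right _ (by positivity)
          have : ∑ x ∈ Finset.Icc 1 ⌈α * (L : ℝ)⌉₊, (x : ℝ) * β ^ (x - 1)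
              = ∑ k ∈ Finset.range ⌈α * (L : ℝ)⌉₊, ((k : ℝ) + 1) * β ^ k := by
            rw [← Finset.Ico_add_one_right_eq_Icc, Finset.sum_Ico_eq_sum_range]
            apply Finset.sum_congr rfl (fun k _ => ?_)
            have hk : 1 + k - 1 = k := by omega
            rw [hk]
            push_cast
            ring
          rw [this]
          exact aux_geom_sum_bound β hβ0.le hβ1 _
      _ ≤ (max (((1 - β) ^ 2)⁻¹) ((L₀ : ℝ) ^ 2) + 1) * (L : ℝ) ^ (-(1 / 2) : ℝ) := by
          rw [hLneg]
          apply mul_le_mul_of_nonneg_right _ (by positivity)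
          have := le_max_left (((1 - β) ^ 2)⁻¹) ((L₀ : ℝ) ^ 2)
          linarith
  · -- small L
    push_neg at hcase
    have hsum1 : ∑ x ∈ Finset.Icc 1 ⌈α * (L : ℝ)⌉₊, ((x : ℝ) / L) ^ ((x : ℝ) - 1 / 2)
        ≤ (L : ℝ) := by
      have hcard : (⌈α * (L : ℝ)⌉₊ : ℝ) ≤ L := by
        have : ⌈α * (L : ℝ)⌉₊ ≤ L := Nat.ceil_le.mpr (by nlinarith)
        exact_mod_cast this
      calc ∑ x ∈ Finset.Icc 1 ⌈α * (L : ℝ)⌉₊, ((x : ℝ) / L) ^ ((x : ℝ) - 1 / 2)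
          ≤ ∑ x ∈ Finset.Icc 1 ⌈α * (L : ℝ)⌉₊, 1 := by
            apply Finset.sum_le_sum
            intro x hx
            rw [Finset.mem_Icc] at hx
            have hx1r : (1 : ℝ) ≤ (x : ℝ) := by exact_mod_cast hx.1
            apply Real.rpow_le_one (by positivity) _ (by linarith)
            rw [div_le_one hL0]
            calc (x : ℝ) ≤ (⌈α * (L : ℝ)⌉₊ : ℝ) := by exact_mod_cast hx.2
              _ ≤ L := hcard
        _ = (⌈α * (L : ℝ)⌉₊ : ℝ) := by simp [Nat.Icc_eq_range']
        _ ≤ (L : ℝ) := hcard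
    have hLL₀ : (L : ℝ) ≤ (L₀ : ℝ) := by exact_mod_cast hcase.le
    have hkey : (L : ℝ) * (L : ℝ) ^ ((1 : ℝ) / 2)
        ≤ max (((1 - β) ^ 2)⁻¹) ((L₀ : ℝ) ^ 2) + 1 := by
      have h2 : (L : ℝ) ^ ((1 : ℝ) / 2) ≤ (L : ℝ) := by
        calc (L : ℝ) ^ ((1 : ℝ) / 2) ≤ (L : ℝ) ^ (1 : ℝ) :=
              Real.rpow_le_rpow_of_exponent_le hL1 (by norm_num)
          _ = (L : ℝ) := Real.rpow_one _
      have h3 : (L : ℝ) * (L : ℝ) ^ ((1 : ℝ) / 2) ≤ (L : ℝ) ^ 2 := by nlinarith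
      have h4 : (L : ℝ) ^ 2 ≤ (L₀ : ℝ) ^ 2 := by nlinarith
      have h5 := le_max_right (((1 - β) ^ 2)⁻¹) ((L₀ : ℝ) ^ 2)
      linarith
    rw [hLneg, ← div_eq_mul_inv]
    calc ∑ x ∈ Finset.Icc 1 ⌈α * (L : ℝ)⌉₊, ((x : ℝ) / L) ^ ((x : ℝ) - 1 / 2)
        ≤ (L : ℝ) := hsum1
      _ ≤ (max (((1 - β) ^ 2)⁻¹) ((L₀ : ℝ) ^ 2) + 1) / (L : ℝ) ^ ((1 : ℝ) / 2) := by
          rw [le_div_iff₀ hLhalf]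
          exact hkey
end

section
/- There exists a constant C > 0 such that for every integer L ≥ 1: Σ_{x=1}^{L} (x/L)^{x − 1/2} ≤ C. -/
/-!
Split the sum at `x = L/2`. For `x ≤ L/2` the base is at most `1/2`, so the terms are dominated
by the geometric sequence `(1/2)^(x-1)`. For `x > L/2` the exponent is at least `L/2`, and
`x/L ≤ exp (x/L - 1)` gives `(x/L)^(L/2) ≤ exp (-(L-x)/2)`, a geometric sequence in `L - x`.
Both geometric sums are bounded independently of `L`.
-/

open Real

lemma rpow_le_exp_sub_one_mul {t s : ℝ} (ht : 0 ≤ t) (hs : 0 ≤ s) :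
    t ^ s ≤ exp ((t - 1) * s) := by
  rw [exp_mul]
  exact rpow_le_rpow ht (by linarith [add_one_le_exp (t - 1)]) hs

lemma sum_pow_comp_le_of_injOn {ι : Type*} {r : ℝ} (hr₀ : 0 ≤ r) (hr₁ : r < 1)
    {s : Finset ι} {g : ι → ℕ} (hg : Set.InjOn g s) :
    ∑ x ∈ s, r ^ g x ≤ (1 - r)⁻¹ := by
  rw [← Finset.sum_image hg, ← tsum_geometric_of_lt_one hr₀ hr₁]
  exact (summable_geometric_of_lt_one hr₀ hr₁).sum_le_tsum _ fun i _ => pow_nonneg hr₀ i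

lemma div_rpow_le_half_pow {x L : ℕ} (hx : 1 ≤ x) (h : 2 * x ≤ L) :
    ((x : ℝ) / L) ^ ((x : ℝ) - 1 / 2) ≤ (1 / 2 : ℝ) ^ (x - 1) := by
  have hx' : (1 : ℝ) ≤ x := by exact_mod_cast hx
  have h' : 2 * (x : ℝ) ≤ L := by exact_mod_cast h
  calc ((x : ℝ) / L) ^ ((x : ℝ) - 1 / 2)
      ≤ (1 / 2 : ℝ) ^ ((x : ℝ) - 1 / 2) := by
        refine rpow_le_rpow (by positivity) ?_ (by linarith)
        rw [div_le_iff₀ (by linarith)]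
        linarith
    _ ≤ (1 / 2 : ℝ) ^ ((x - 1 : ℕ) : ℝ) := by
        refine rpow_le_rpow_of_exponent_ge (by norm_num) (by norm_num) ?_
        push_cast [hx]
        linarith
    _ = (1 / 2 : ℝ) ^ (x - 1) := rpow_natCast _ _

lemma div_rpow_le_exp_pow {x L : ℕ} (hxL : x ≤ L) (h : L < 2 * x) :
    ((x : ℝ) / L) ^ ((x : ℝ) - 1 / 2) ≤ exp (-1 / 2) ^ (L - x) := by
  have hL : (0 : ℝ) < L := by exact_mod_cast (show 0 < L by omega)
  have hxL' : (x : ℝ) ≤ L := by exact_mod_cast hxL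
  have h' : (L : ℝ) + 1 ≤ 2 * x := by exact_mod_cast h
  have hratio : (x : ℝ) / L - 1 = -((L - x) / L) := by field_simp; ring
  calc ((x : ℝ) / L) ^ ((x : ℝ) - 1 / 2)
      ≤ ((x : ℝ) / L) ^ ((L : ℝ) / 2) :=
        rpow_le_rpow_of_exponent_ge' (by positivity) (div_le_one_of_le₀ hxL' hL.le) (by positivity)
          (by linarith)
    _ ≤ exp (((x : ℝ) / L - 1) * (L / 2)) := rpow_le_exp_sub_one_mul (by positivity) (by positivity)
    _ = exp (-1 / 2 * (L - x : ℕ)) := by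
        rw [hratio]
        push_cast [hxL]
        field_simp
    _ = exp (-1 / 2) ^ (L - x) := by rw [mul_comm, exp_nat_mul]

lemma div_rpow_le_half_pow_add_exp_pow {x L : ℕ} (hx : 1 ≤ x) (hxL : x ≤ L) :
    ((x : ℝ) / L) ^ ((x : ℝ) - 1 / 2) ≤ (1 / 2 : ℝ) ^ (x - 1) + exp (-1 / 2) ^ (L - x) := by
  rcases le_or_gt (2 * x) L with h | h
  · exact le_add_of_le_of_nonneg (div_rpow_le_half_pow hx h) (by positivity)
  · exact le_add_of_nonneg_of_le (by positivity) (div_rpow_le_exp_pow hxL h)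

/-- There exists a constant `C > 0` such that for every integer `L ≥ 1`,
`∑_{x=1}^{L} (x/L)^(x - 1/2) ≤ C`, where powers are real powers. -/
theorem sum_ratio_rpow_bounded :
    ∃ C : ℝ, 0 < C ∧ ∀ L : ℕ, 1 ≤ L →
      ∑ x ∈ Finset.Icc 1 L, ((x : ℝ) / (L : ℝ)) ^ ((x : ℝ) - 1 / 2) ≤ C := by
  have hexp : exp (-1 / 2) < 1 := exp_lt_one_iff.2 (by norm_num)
  refine ⟨(1 - 1 / 2)⁻¹ + (1 - exp (-1 / 2))⁻¹,
    add_pos (by norm_num) (inv_pos.2 (sub_pos.2 hexp)), fun L _ => ?_⟩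
  calc ∑ x ∈ Finset.Icc 1 L, ((x : ℝ) / L) ^ ((x : ℝ) - 1 / 2)
      ≤ ∑ x ∈ Finset.Icc 1 L, ((1 / 2 : ℝ) ^ (x - 1) + exp (-1 / 2) ^ (L - x)) :=
        Finset.sum_le_sum fun x hx =>
          div_rpow_le_half_pow_add_exp_pow (Finset.mem_Icc.1 hx).1 (Finset.mem_Icc.1 hx).2
    _ ≤ _ := by
        rw [Finset.sum_add_distrib]
        gcongr
        · refine sum_pow_comp_le_of_injOn (by norm_num) (by norm_num) fun x hx y hy hxy => ?_
          simp only [Finset.coe_Icc, Set.mem_Icc] at hx hy hxy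
          omega
        · refine sum_pow_comp_le_of_injOn (exp_pos _).le hexp fun x hx y hy hxy => ?_
          simp only [Finset.coe_Icc, Set.mem_Icc] at hx hy hxy
          omega
end

section
/- For every real α with 1/2 < α < 1 there exists a constant C = C(α) > 0 such that for all integers q and n_L with 2 ≤ n_L ≤ q: Σ_{L=1}^{⌊(q+1)/(α n_L)⌋} L^{(n_L−1)/2} · (L/q)^{q} ≤ C · (q+1)^{(n_L+1)/2} · (α n_L)^{−(q+1)}, and moreover (q+1)^{(n_L+1)/2} · (α n_L)^{−(q+1)} ≤ C. -/
open scoped BigOperators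

lemma quartic_aux (u : ℝ) : 8*u^3 - u^4 ≤ 432 := by
  nlinarith [sq_nonneg (u-6), sq_nonneg ((u-6)*(u+2))]

lemma exp_aux (b t : ℝ) (hb : 0 < b) (ht : 1 ≤ t) :
    2 * Real.sqrt t * Real.log t - b * t ≤ 432 / b^3 := by
  have ht0 : (0:ℝ) < t := by linarith
  set s : ℝ := t ^ ((1:ℝ)/4) with hs
  have hs0 : 0 < s := Real.rpow_pos_of_pos ht0 _
  have hs4 : s^4 = t := by
    rw [hs, ← Real.rpow_natCast (t ^ ((1:ℝ)/4)) 4, ← Real.rpow_mul ht0.le]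
    norm_num
  have hlog : Real.log t ≤ 4 * s := by
    have h1 : Real.log s = (1/4) * Real.log t := by
      rw [hs, Real.log_rpow ht0]
    have h2 : Real.log s ≤ s := (Real.log_le_sub_one_of_pos hs0).trans (by linarith)
    linarith
  have hsqrt : Real.sqrt t = s^2 := by
    rw [Real.sqrt_eq_rpow, hs, ← Real.rpow_natCast (t ^ ((1:ℝ)/4)) 2, ← Real.rpow_mul ht0.le]
    norm_num
  have hlogt0 : 0 ≤ Real.log t := Real.log_nonneg ht
  have hlt : 2 * Real.sqrt t * Real.log t ≤ 8 * s^3 := by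
    rw [hsqrt]
    nlinarith [sq_nonneg s, hlog, hs0.le]
  have hkey : 8 * s^3 - b * s^4 ≤ 432 / b^3 := by
    rw [le_div_iff₀ (by positivity)]
    nlinarith [quartic_aux (b * s)]
  have hbt : b * t = b * s^4 := by rw [hs4]
  linarith

set_option maxHeartbeats 1000000 in
/-- For every real `α` with `1/2 < α < 1` there exists `C = C(α) > 0` such that
for all integers `q, n_L` with `2 ≤ n_L ≤ q`:
`∑_{L=1}^{⌊(q+1)/(α n_L)⌋} L^((n_L-1)/2) (L/q)^q ≤ C (q+1)^((n_L+1)/2) (α n_L)^(-(q+1))`,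
and moreover `(q+1)^((n_L+1)/2) (α n_L)^(-(q+1)) ≤ C`. -/
theorem sum_large_intervals_bound (α : ℝ) (hα₁ : 1 / 2 < α) (hα₂ : α < 1) :
    ∃ C : ℝ, 0 < C ∧ ∀ q nL : ℕ, 2 ≤ nL → nL ≤ q →
      (∑ L ∈ Finset.Icc 1 ⌊((q : ℝ) + 1) / (α * (nL : ℝ))⌋₊,
          (L : ℝ) ^ (((nL : ℝ) - 1) / 2) * ((L : ℝ) / (q : ℝ)) ^ q
        ≤ C * ((q : ℝ) + 1) ^ (((nL : ℝ) + 1) / 2) * (α * (nL : ℝ)) ^ (-((q : ℝ) + 1))) ∧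
      ((q : ℝ) + 1) ^ (((nL : ℝ) + 1) / 2) * (α * (nL : ℝ)) ^ (-((q : ℝ) + 1)) ≤ C := by
  have h2α : 1 < 2 * α := by linarith
  have hb : 0 < Real.log (2*α) := Real.log_pos h2α
  set b := Real.log (2*α) with hbdef
  refine ⟨3 * Real.exp (432 / b^3), by positivity, ?_⟩
  intro q nL h2 hq
  have hα0 : 0 < α := by linarith
  have hnL2 : (2:ℝ) ≤ (nL:ℝ) := by exact_mod_cast h2
  have hq2 : 2 ≤ q := le_trans h2 hq
  have hqR : (2:ℝ) ≤ (q:ℝ) := by exact_mod_cast hq2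
  have hq0 : (0:ℝ) < q := by linarith
  set a := α * (nL:ℝ) with hadef
  have ha1 : 1 < a := by nlinarith
  have ha0 : 0 < a := by linarith
  have ht0 : (0:ℝ) < (q:ℝ) + 1 := by linarith
  have ht1 : (1:ℝ) ≤ (q:ℝ) + 1 := by linarith
  have hnq : (nL:ℝ) ≤ (q:ℝ) := by exact_mod_cast hq
  set t := (q:ℝ) + 1 with htdef
  -- second claim
  have second : t ^ (((nL:ℝ)+1)/2) * a ^ (-t) ≤ Real.exp (432 / b^3) := by
    rw [Real.rpow_def_of_pos ht0, Real.rpow_def_of_pos ha0, ← Real.exp_add]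
    apply Real.exp_le_exp.mpr
    have hloga_b : b ≤ Real.log a := by
      rw [hbdef]
      apply Real.log_le_log (by positivity)
      nlinarith
    have hlogt0 : 0 ≤ Real.log t := Real.log_nonneg ht1
    have hdpos : 0 < 432 / b^3 := by positivity
    by_cases hcase : 2 * Real.sqrt t ≤ (nL:ℝ)
    · have hsa : Real.sqrt t ≤ a := by nlinarith [Real.sqrt_nonneg t]
      have hlog2 : Real.log t / 2 ≤ Real.log a := by
        rw [← Real.log_sqrt ht0.le]
        exact Real.log_le_log (Real.sqrt_pos.mpr ht0) hsa
      have h1 : (((nL:ℝ)+1)/2) * Real.log t ≤ (t/2) * Real.log t := by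
        apply mul_le_mul_of_nonneg_right _ hlogt0
        rw [htdef]; linarith
      have h2' : (t/2) * Real.log t ≤ t * Real.log a := by
        have := mul_le_mul_of_nonneg_left hlog2 ht0.le
        nlinarith
      nlinarith
    · push_neg at hcase
      have hst1 : (1:ℝ) ≤ Real.sqrt t := by
        rw [show (1:ℝ) = Real.sqrt 1 by simp]
        exact Real.sqrt_le_sqrt ht1
      have hnorm : ((nL:ℝ)+1)/2 ≤ 2 * Real.sqrt t := by linarith
      have h1 : (((nL:ℝ)+1)/2) * Real.log t ≤ 2 * Real.sqrt t * Real.log t :=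
        mul_le_mul_of_nonneg_right hnorm hlogt0
      have h2' : b * t ≤ Real.log a * t := mul_le_mul_of_nonneg_right hloga_b ht0.le
      have := exp_aux b t hb ht1
      nlinarith
  have hexp1 : (1:ℝ) ≤ Real.exp (432 / b^3) := Real.one_le_exp (by positivity)
  have hC3 : (3:ℝ) ≤ 3 * Real.exp (432 / b^3) := by linarith
  refine ⟨?_, second.trans (by linarith [Real.exp_pos (432/b^3)])⟩
  -- first claim
  set N := ⌊t / a⌋₊ with hN
  have hNle : (N:ℝ) ≤ t / a := Nat.floor_le (by positivity)
  have hrpow0 : (0:ℝ) ≤ (t/a) ^ (((nL:ℝ)-1)/2) := Real.rpow_nonneg (by positivity) _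
  have hsum : ∑ L ∈ Finset.Icc 1 N, (L:ℝ) ^ (((nL:ℝ)-1)/2) * ((L:ℝ)/q)^q
      ≤ (N:ℝ) * ((t/a) ^ (((nL:ℝ)-1)/2) * (t/(a*q))^q) := by
    have hcard : (Finset.Icc 1 N).card = N := by simp
    calc ∑ L ∈ Finset.Icc 1 N, (L:ℝ) ^ (((nL:ℝ)-1)/2) * ((L:ℝ)/q)^q
        ≤ ∑ _L ∈ Finset.Icc 1 N, ((t/a) ^ (((nL:ℝ)-1)/2) * (t/(a*q))^q) := by
          apply Finset.sum_le_sum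
          intro L hL
          have hLN : (L:ℝ) ≤ (N:ℝ) := by exact_mod_cast (Finset.mem_Icc.mp hL).2
          have hL' : (L:ℝ) ≤ t/a := hLN.trans hNle
          have hL0 : (0:ℝ) ≤ (L:ℝ) := Nat.cast_nonneg L
          have hexp0 : (0:ℝ) ≤ ((nL:ℝ)-1)/2 := by linarith
          apply mul_le_mul
          · exact Real.rpow_le_rpow hL0 hL' hexp0
          · apply pow_le_pow_left₀ (by positivity)
            have hdd : (L:ℝ)/q ≤ (t/a)/q := by gcongr
            rwa [div_div] at hdd
          · positivity
          · exact hrpow0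
      _ = (N:ℝ) * ((t/a) ^ (((nL:ℝ)-1)/2) * (t/(a*q))^q) := by
          rw [Finset.sum_const, hcard, nsmul_eq_mul]
  have hNM : (N:ℝ) * ((t/a) ^ (((nL:ℝ)-1)/2) * (t/(a*q))^q)
      ≤ (t/a) * ((t/a) ^ (((nL:ℝ)-1)/2) * (t/(a*q))^q) :=
    mul_le_mul_of_nonneg_right hNle (by positivity)
  have hsplit : (t/a) * ((t/a) ^ (((nL:ℝ)-1)/2) * (t/(a*q))^q)
      = (t/a) ^ (((nL:ℝ)+1)/2) * (t/(a*q))^q := by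
    rw [show ((nL:ℝ)+1)/2 = 1 + ((nL:ℝ)-1)/2 by ring, Real.rpow_add (by positivity),
      Real.rpow_one, mul_assoc]
    ring
  have split1 : (t/a) ^ (((nL:ℝ)+1)/2) = t ^ (((nL:ℝ)+1)/2) * a ^ (-(((nL:ℝ)+1)/2)) := by
    rw [Real.div_rpow ht0.le ha0.le, Real.rpow_neg ha0.le, div_eq_mul_inv]
  have split2 : (t/(a*(q:ℝ)))^q = (t/(q:ℝ))^q * a ^ (-(q:ℝ)) := by
    rw [Real.rpow_neg ha0.le, Real.rpow_natCast,
      show t/(a*(q:ℝ)) = (t/(q:ℝ)) * a⁻¹ by rw [mul_comm a (q:ℝ), ← div_div, div_eq_mul_inv], mul_pow, inv_pow]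
  have hq3 : (t/(q:ℝ))^q ≤ 3 := by
    have h1 : t/(q:ℝ) = 1/(q:ℝ) + 1 := by rw [htdef, add_div, div_self hq0.ne']; ring
    have h2 : t/(q:ℝ) ≤ Real.exp (1/(q:ℝ)) := by rw [h1]; exact Real.add_one_le_exp _
    calc (t/(q:ℝ))^q ≤ Real.exp (1/(q:ℝ)) ^ q := pow_le_pow_left₀ (by positivity) h2 q
      _ = Real.exp ((q:ℕ) * (1/(q:ℝ))) := (Real.exp_nat_mul _ _).symm
      _ = Real.exp 1 := by rw [mul_one_div, div_self hq0.ne']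
      _ ≤ 3 := by linarith [Real.exp_one_lt_d9]
  have amul : a ^ (-(((nL:ℝ)+1)/2)) * a ^ (-(q:ℝ)) = a ^ (-(((nL:ℝ)+1)/2) + -(q:ℝ)) :=
    (Real.rpow_add ha0 _ _).symm
  have amono : a ^ (-(((nL:ℝ)+1)/2) + -(q:ℝ)) ≤ a ^ (-t) := by
    apply Real.rpow_le_rpow_of_exponent_le ha1.le
    rw [htdef]; linarith
  calc ∑ L ∈ Finset.Icc 1 N, (L:ℝ) ^ (((nL:ℝ)-1)/2) * ((L:ℝ)/(q:ℝ))^q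
      ≤ (N:ℝ) * ((t/a) ^ (((nL:ℝ)-1)/2) * (t/(a*(q:ℝ)))^q) := hsum
    _ ≤ (t/a) ^ (((nL:ℝ)+1)/2) * (t/(a*(q:ℝ)))^q := by rw [← hsplit]; exact hNM
    _ = t ^ (((nL:ℝ)+1)/2) * a ^ (-(((nL:ℝ)+1)/2)) * ((t/(q:ℝ))^q * a ^ (-(q:ℝ))) := by
        rw [split1, split2]
    _ = t ^ (((nL:ℝ)+1)/2) * (t/(q:ℝ))^q * (a ^ (-(((nL:ℝ)+1)/2)) * a ^ (-(q:ℝ))) := by ring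
    _ = t ^ (((nL:ℝ)+1)/2) * (t/(q:ℝ))^q * a ^ (-(((nL:ℝ)+1)/2) + -(q:ℝ)) := by rw [amul]
    _ ≤ t ^ (((nL:ℝ)+1)/2) * 3 * a ^ (-t) := by gcongr <;> positivity
    _ = 3 * t ^ (((nL:ℝ)+1)/2) * a ^ (-t) := by ring
    _ ≤ 3 * Real.exp (432 / b^3) * t ^ (((nL:ℝ)+1)/2) * a ^ (-t) := by gcongr <;> positivity
end

section
/- Let A = Σ_{i=1}^{N} A_i and B = Σ_{j=1}^{N} B_j be extensive operators of ranges R_A and R_B respectively, with local norms ‖A‖_l ≤ a and ‖B‖_l ≤ b. Then there exists a family (C_i)_{i=1,…,N} of matrices such that each C_i is supported on {i, i+1, …, min(i+R_A+R_B−2, N)}, the commutator satisfies [A, B] = Σ_{i=1}^{N} C_i, and max_i ‖C_i‖ ≤ 2(R_A + R_B − 1)·a·b. -/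
open scoped BigOperators Matrix.Norms.L2Operator

/-- A matrix acting on the configuration space `Fin N → Fin d` is *supported* on a set `S`
of sites if `A x y = 0` whenever the configurations `x, y` differ at some site outside `S`,
and `A x y` depends only on the restrictions of `x` and `y` to `S`. -/
def SupportedOn {N d : ℕ} (A : Matrix (Fin N → Fin d) (Fin N → Fin d) ℂ)
    (S : Set (Fin N)) : Prop :=
  (∀ x y, (∃ i ∉ S, x i ≠ y i) → A x y = 0) ∧
  (∀ x y x' y', (∀ i ∈ S, x i = x' i) → (∀ i ∈ S, y i = y' i) →
    (∀ i ∉ S, x i = y i) → (∀ i ∉ S, x' i = y' i) → A x y = A x' y')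

/-!
Terms `[A i, B j]` whose supports are disjoint vanish. An overlapping pair has `i ≤ j < i + R_A`
or `j < i < j + R_B`, and both blocks then lie in the block of length `R_A + R_B - 1` starting at
`min i j`, so the pair is assigned to `C (min i j)`. Each `C k` thus collects at most
`R_A + (R_B - 1)` commutators, each of norm at most `2ab`.
-/

namespace SupportedOn

variable {N d : ℕ} {A B : Matrix (Fin N → Fin d) (Fin N → Fin d) ℂ} {S T : Set (Fin N)}

lemma zero : SupportedOn (0 : Matrix (Fin N → Fin d) (Fin N → Fin d) ℂ) S :=
  ⟨fun _ _ _ => rfl, fun _ _ _ _ _ _ _ _ => rfl⟩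

lemma add (hA : SupportedOn A S) (hB : SupportedOn B S) : SupportedOn (A + B) S :=
  ⟨fun x y h => by simp [hA.1 x y h, hB.1 x y h],
    fun x y x' y' h₁ h₂ h₃ h₄ => by simp [hA.2 x y x' y' h₁ h₂ h₃ h₄, hB.2 x y x' y' h₁ h₂ h₃ h₄]⟩

lemma sub (hA : SupportedOn A S) (hB : SupportedOn B S) : SupportedOn (A - B) S :=
  ⟨fun x y h => by simp [hA.1 x y h, hB.1 x y h],
    fun x y x' y' h₁ h₂ h₃ h₄ => by simp [hA.2 x y x' y' h₁ h₂ h₃ h₄, hB.2 x y x' y' h₁ h₂ h₃ h₄]⟩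

lemma sum {ι : Type*} (s : Finset ι) {f : ι → Matrix (Fin N → Fin d) (Fin N → Fin d) ℂ}
    (h : ∀ i ∈ s, SupportedOn (f i) S) : SupportedOn (∑ i ∈ s, f i) S :=
  Finset.sum_induction f (SupportedOn · S) (fun _ _ => add) zero h

/-- The second clause of `SupportedOn` is invariance of `A` under relabelling the local states
at each site outside `S`. -/
lemma iff_forall_perm : SupportedOn A S ↔ (∀ x y, (∃ i ∉ S, x i ≠ y i) → A x y = 0) ∧
    ∀ σ : Fin N → Equiv.Perm (Fin d), (∀ i ∈ S, σ i = 1) →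
      ∀ x y, A (Equiv.piCongrRight σ x) (Equiv.piCongrRight σ y) = A x y := by
  classical
  refine ⟨fun hA => ⟨hA.1, fun σ hσ x y => ?_⟩, fun ⟨hA₀, hAσ⟩ => ⟨hA₀, ?_⟩⟩
  · by_cases hxy : ∃ i ∉ S, x i ≠ y i
    · obtain ⟨i, hi, hne⟩ := hxy
      rw [hA.1 x y ⟨i, hi, hne⟩, hA.1 _ _ ⟨i, hi, by simpa using hne⟩]
    · push Not at hxy
      exact hA.2 _ _ _ _ (fun i hi => by simp [hσ i hi]) (fun i hi => by simp [hσ i hi])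
        (fun i hi => by simp [hxy i hi]) hxy
  · intro x y x' y' h₁ h₂ h₃ h₄
    let σ : Fin N → Equiv.Perm (Fin d) := fun i => if i ∈ S then 1 else Equiv.swap (x i) (x' i)
    have hx : Equiv.piCongrRight σ x = x' := by
      funext i; by_cases hi : i ∈ S <;> simp [σ, hi, h₁]
    have hy : Equiv.piCongrRight σ y = y' := by
      funext i; by_cases hi : i ∈ S <;> simp [σ, hi, h₂, ← h₃ i, h₄]
    rw [← hx, ← hy, hAσ σ (fun i hi => by simp [σ, hi])]

lemma mono (hA : SupportedOn A S) (hST : S ⊆ T) : SupportedOn A T := by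
  rw [iff_forall_perm] at hA ⊢
  exact ⟨fun x y ⟨i, hi, hne⟩ => hA.1 x y ⟨i, fun h => hi (hST h), hne⟩,
    fun σ hσ => hA.2 σ fun i hi => hσ i (hST hi)⟩

lemma mul (hA : SupportedOn A S) (hB : SupportedOn B S) : SupportedOn (A * B) S := by
  rw [iff_forall_perm] at hA hB ⊢
  refine ⟨fun x y ⟨i, hi, hne⟩ => ?_, fun σ hσ x y => ?_⟩
  · refine (Matrix.mul_apply ..).trans <| Finset.sum_eq_zero fun z _ => ?_
    by_cases hxz : x i = z i
    · rw [hB.1 z y ⟨i, hi, hxz ▸ hne⟩, mul_zero]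
    · rw [hA.1 x z ⟨i, hi, hxz⟩, zero_mul]
  · simp only [Matrix.mul_apply]
    rw [← (Equiv.piCongrRight σ).sum_comp]
    simp only [hA.2 σ hσ, hB.2 σ hσ]

lemma mul_apply_of_disjoint [∀ i, Decidable (i ∈ S)] (hA : SupportedOn A S)
    (hB : SupportedOn B T) (hST : Disjoint S T) (x y : Fin N → Fin d) :
    (A * B) x y = A x (S.piecewise y x) * B (S.piecewise y x) y := by
  rw [Matrix.mul_apply]
  refine Finset.sum_eq_single_of_mem _ (Finset.mem_univ _) fun z _ hz => ?_
  obtain ⟨i, hi⟩ := Function.ne_iff.mp hz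
  by_cases hiS : i ∈ S
  · rw [Set.piecewise_eq_of_mem _ _ _ hiS] at hi
    rw [hB.1 z y ⟨i, Set.disjoint_left.mp hST hiS, hi⟩, mul_zero]
  · rw [Set.piecewise_eq_of_notMem _ _ _ hiS] at hi
    rw [hA.1 x z ⟨i, hiS, Ne.symm hi⟩, zero_mul]

lemma commutator_of_subset {U : Set (Fin N)} (hA : SupportedOn A S) (hB : SupportedOn B T)
    (hSU : S ⊆ U) (hTU : T ⊆ U) : SupportedOn (A * B - B * A) U :=
  ((hA.mono hSU).mul (hB.mono hTU)).sub ((hB.mono hTU).mul (hA.mono hSU))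

lemma apply_piecewise_eq [∀ i, Decidable (i ∈ S)] [∀ i, Decidable (i ∈ T)]
    (hA : SupportedOn A S) (hST : Disjoint S T) {x y : Fin N → Fin d}
    (hxy : ∀ i ∉ S ∪ T, x i = y i) : A x (S.piecewise y x) = A (T.piecewise y x) y := by
  refine hA.2 _ _ _ _ (fun i hi => by simp [Set.disjoint_left.mp hST hi])
    (fun i hi => by simp [hi]) (fun i hi => by simp [hi]) (fun i hi => ?_)
  by_cases hiT : i ∈ T
  · simp [hiT]
  · simp [hiT, hxy i (by simp [hi, hiT])]

theorem commute_of_disjoint (hA : SupportedOn A S) (hB : SupportedOn B T)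
    (hST : Disjoint S T) : Commute A B := by
  classical
  refine Matrix.ext fun x y => ?_
  rw [mul_apply_of_disjoint hA hB hST, mul_apply_of_disjoint hB hA hST.symm]
  by_cases hxy : ∃ i ∉ S ∪ T, x i ≠ y i
  · obtain ⟨i, hi, hne⟩ := hxy
    simp only [Set.mem_union, not_or] at hi
    rw [hB.1 (S.piecewise y x) y ⟨i, hi.2, by simpa [hi.1] using hne⟩,
      hA.1 (T.piecewise y x) y ⟨i, hi.1, by simpa [hi.2] using hne⟩, mul_zero, mul_zero]
  · push Not at hxy
    rw [apply_piecewise_eq hA hST hxy,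
      ← apply_piecewise_eq hB hST.symm (by simpa [or_comm] using hxy), mul_comm]

end SupportedOn

theorem sum_mul_sum_sub_sum_mul_sum_of_commute {R ι : Type*} [Ring R] [Fintype ι] (A B : ι → R)
    (p q : ι → ι → Prop) [DecidableRel p] [DecidableRel q] (hpq : ∀ i j, p i j → ¬ q i j)
    (hcomm : ∀ i j, ¬ p i j → ¬ q i j → Commute (A i) (B j)) :
    (∑ i, A i) * (∑ j, B j) - (∑ j, B j) * (∑ i, A i) =
      ∑ k, (∑ j with p k j, (A k * B j - B j * A k) + ∑ i with q i k, (A i * B k - B k * A i)) := by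
  have split (i j : ι) : A i * B j - B j * A i =
      (if p i j then A i * B j - B j * A i else 0) + (if q i j then A i * B j - B j * A i else 0) := by
    by_cases hp : p i j
    · simp [hp, hpq i j hp]
    by_cases hq : q i j
    · simp [hp, hq]
    · simp [hp, hq, (hcomm i j hp hq).eq]
  calc (∑ i, A i) * (∑ j, B j) - (∑ j, B j) * (∑ i, A i)
      = ∑ i, ∑ j, (A i * B j - B j * A i) := by
        rw [Finset.sum_mul_sum, Finset.sum_mul_sum, Finset.sum_comm (f := fun j i => B j * A i)]
        simp only [← Finset.sum_sub_distrib]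
    _ = ∑ i, ∑ j, ((if p i j then A i * B j - B j * A i else 0) +
          (if q i j then A i * B j - B j * A i else 0)) :=
        Finset.sum_congr rfl fun i _ => Finset.sum_congr rfl fun j _ => split i j
    _ = _ := by
        simp only [Finset.sum_add_distrib, Finset.sum_filter]
        rw [Finset.sum_comm (f := fun i k => if q i k then _ else _)]

theorem norm_mul_sub_mul_le {R : Type*} [SeminormedRing R] (x y : R) :
    ‖x * y - y * x‖ ≤ 2 * ‖x‖ * ‖y‖ :=
  calc ‖x * y - y * x‖ ≤ ‖x * y‖ + ‖y * x‖ := norm_sub_le _ _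
    _ ≤ ‖x‖ * ‖y‖ + ‖y‖ * ‖x‖ := add_le_add (norm_mul_le _ _) (norm_mul_le _ _)
    _ = 2 * ‖x‖ * ‖y‖ := by ring

theorem norm_sum_le_card_mul {E ι : Type*} [SeminormedAddCommGroup E] {s : Finset ι}
    {f : ι → E} {c : ℝ} (h : ∀ i ∈ s, ‖f i‖ ≤ c) : ‖∑ i ∈ s, f i‖ ≤ s.card * c := by
  simpa using norm_sum_le_of_le s h

theorem Fin.card_filter_le_val_lt_le (N m n : ℕ) :
    (Finset.univ.filter fun j : Fin N => m ≤ (j : ℕ) ∧ (j : ℕ) < n).card ≤ n - m := by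
  simpa using Finset.card_le_card_of_injOn (t := Finset.Ico m n) Fin.val
    (fun j hj => by simpa using hj) Fin.val_injective.injOn

theorem Fin.setOf_block_subset {N m n R L : ℕ} (hnm : n ≤ m) (hRL : m + R ≤ n + L) :
    {j : Fin N | m ≤ (j : ℕ) ∧ (j : ℕ) < m + R} ⊆ {j : Fin N | n ≤ (j : ℕ) ∧ (j : ℕ) < n + L} :=
  fun _ hj => ⟨hnm.trans hj.1, hj.2.trans_le hRL⟩

theorem commutator_of_extensive_operators_general {N d : ℕ}
    (RA RB : ℕ) (hRA : 1 ≤ RA) (hRB : 1 ≤ RB) (a b : ℝ)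
    (A B : Fin N → Matrix (Fin N → Fin d) (Fin N → Fin d) ℂ)
    (hA : ∀ i, SupportedOn (A i) {j : Fin N | (i : ℕ) ≤ (j : ℕ) ∧ (j : ℕ) < (i : ℕ) + RA})
    (hB : ∀ i, SupportedOn (B i) {j : Fin N | (i : ℕ) ≤ (j : ℕ) ∧ (j : ℕ) < (i : ℕ) + RB})
    (ha : ∀ i, ‖A i‖ ≤ a) (hb : ∀ i, ‖B i‖ ≤ b) :
    ∃ C : Fin N → Matrix (Fin N → Fin d) (Fin N → Fin d) ℂ,
      (∀ i, SupportedOn (C i)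
        {j : Fin N | (i : ℕ) ≤ (j : ℕ) ∧ (j : ℕ) < (i : ℕ) + (RA + RB - 1)}) ∧
      (∑ i, A i) * (∑ i, B i) - (∑ i, B i) * (∑ i, A i) = ∑ i, C i ∧
      ∀ i, ‖C i‖ ≤ 2 * ((RA : ℝ) + (RB : ℝ) - 1) * a * b := by
  classical
  let inBlockA : Fin N → Fin N → Prop := fun i j => (i : ℕ) ≤ j ∧ (j : ℕ) < i + RA
  let inBlockB : Fin N → Fin N → Prop := fun i j => (j : ℕ) + 1 ≤ i ∧ (i : ℕ) < j + RB
  refine ⟨fun k => ∑ j with inBlockA k j, (A k * B j - B j * A k) +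
      ∑ i with inBlockB i k, (A i * B k - B k * A i), fun k => ?_, ?_, fun k => ?_⟩
  · refine .add (.sum _ fun j hj => ?_) (.sum _ fun i hi => ?_)
    · simp only [Finset.mem_filter, Finset.mem_univ, true_and, inBlockA] at hj
      exact (hA k).commutator_of_subset (hB j)
        (Fin.setOf_block_subset le_rfl (by omega)) (Fin.setOf_block_subset hj.1 (by omega))
    · simp only [Finset.mem_filter, Finset.mem_univ, true_and, inBlockB] at hi
      exact (hA i).commutator_of_subset (hB k)
        (Fin.setOf_block_subset (by omega) (by omega)) (Fin.setOf_block_subset le_rfl (by omega))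
  · refine sum_mul_sum_sub_sum_mul_sum_of_commute A B inBlockA inBlockB
      (fun i j h _ => by simp only [inBlockA, inBlockB] at *; omega) fun i j hij hji =>
        (hA i).commute_of_disjoint (hB j) (Set.disjoint_left.mpr ?_)
    rintro p ⟨h₁, h₂⟩ ⟨h₃, h₄⟩
    simp only [inBlockA, inBlockB] at hij hji
    omega
  · have ha₀ : 0 ≤ a := (norm_nonneg _).trans (ha k)
    have hb₀ : 0 ≤ b := (norm_nonneg _).trans (hb k)
    have hterm (i j : Fin N) : ‖A i * B j - B j * A i‖ ≤ 2 * a * b :=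
      (norm_mul_sub_mul_le _ _).trans (by gcongr; exacts [ha i, hb j])
    calc _ ≤ RA * (2 * a * b) + ((RB - 1 : ℕ) : ℝ) * (2 * a * b) := by
          refine (norm_add_le _ _).trans (add_le_add ?_ ?_) <;>
            refine (norm_sum_le_card_mul fun _ _ => hterm _ _).trans ?_ <;> gcongr <;>
            exact_mod_cast (Fin.card_filter_le_val_lt_le N _ _).trans_eq (by omega)
      _ = 2 * ((RA : ℝ) + (RB : ℝ) - 1) * a * b := by push_cast [hRB]; ring

/-- if `A = Σᵢ Aᵢ` and `B = Σᵢ Bᵢ` are extensive operators of ranges `R_A`,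
`R_B` with local norms `≤ a` and `≤ b`, then `[A,B] = Σᵢ Cᵢ` where each `Cᵢ` is supported
on an interval of `R_A + R_B − 1` sites starting at `i`, with `‖Cᵢ‖ ≤ 2(R_A+R_B−1)ab`. -/
theorem commutator_of_extensive_operators {N d : ℕ} (hd : 2 ≤ d) (hN : 1 ≤ N)
    (RA RB : ℕ) (hRA : 1 ≤ RA) (hRB : 1 ≤ RB) (a b : ℝ)
    (A B : Fin N → Matrix (Fin N → Fin d) (Fin N → Fin d) ℂ)
    (hA : ∀ i, SupportedOn (A i) {j : Fin N | (i : ℕ) ≤ (j : ℕ) ∧ (j : ℕ) < (i : ℕ) + RA})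
    (hB : ∀ i, SupportedOn (B i) {j : Fin N | (i : ℕ) ≤ (j : ℕ) ∧ (j : ℕ) < (i : ℕ) + RB})
    (ha : ∀ i, ‖A i‖ ≤ a) (hb : ∀ i, ‖B i‖ ≤ b) :
    ∃ C : Fin N → Matrix (Fin N → Fin d) (Fin N → Fin d) ℂ,
      (∀ i, SupportedOn (C i)
        {j : Fin N | (i : ℕ) ≤ (j : ℕ) ∧ (j : ℕ) < (i : ℕ) + (RA + RB - 1)}) ∧
      (∑ i, A i) * (∑ i, B i) - (∑ i, B i) * (∑ i, A i) = ∑ i, C i ∧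
      ∀ i, ‖C i‖ ≤ 2 * ((RA : ℝ) + (RB : ℝ) - 1) * a * b :=
  commutator_of_extensive_operators_general RA RB hRA hRB a b A B hA hB ha hb
end

section
/- Let Ω : ℝ → M_n(ℂ) be a differentiable matrix-valued function. Then for every t, the map t ↦ exp(Ω(t)) is differentiable and d/dt exp(Ω(t)) = ∫_{0}^{1} exp(s·Ω(t)) · Ω'(t) · exp((1−s)·Ω(t)) ds. -/
open scoped Matrix.Norms.L2Operator

/-!
Along the segment from `A` to `B`, the function `s ↦ exp (s • B) * exp ((1 - s) • A)` has
derivative `exp (s • B) * (B - A) * exp ((1 - s) • A)`, so the fundamental theorem of calculus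
writes `exp B - exp A` as the Duhamel integral of `B - A`. Taking `A = f t`, `B = f u`, the slope
of `exp ∘ f` between `t` and `u` is the Duhamel integral of the slope of `f`. That integral is
jointly continuous in the exponent `f u` and the integrand's middle factor, so letting `u → t`
gives the derivative; no commutativity of `f u` with `f t` is needed.
-/

open Filter Topology

namespace NormedSpace

variable {𝔸 : Type*} [NormedRing 𝔸] [NormedAlgebra ℝ 𝔸] [CompleteSpace 𝔸]

theorem continuous_exp_of_real : Continuous (exp : 𝔸 → 𝔸) :=
  letI : NormedAlgebra ℚ 𝔸 := NormedAlgebra.restrictScalars ℚ ℝ 𝔸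
  exp_continuous

theorem hasDerivAt_exp_smul_mul_exp_one_sub_smul (A B : 𝔸) (s : ℝ) :
    HasDerivAt (fun s : ℝ => exp (s • B) * exp ((1 - s) • A))
      (exp (s • B) * (B - A) * exp ((1 - s) • A)) s := by
  have hB := hasDerivAt_exp_smul_const (𝕂 := ℝ) B s
  have hA : HasDerivAt (fun s : ℝ => exp ((1 - s) • A)) (-(A * exp ((1 - s) • A))) s := by
    simpa [Function.comp_def] using
      (hasDerivAt_exp_smul_const' (𝕂 := ℝ) A (1 - s)).scomp s ((hasDerivAt_id s).const_sub 1)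
  exact (hB.mul hA).congr_deriv (by noncomm_ring)

theorem continuous_integral_exp_smul_mul_mul_exp_smul (A : 𝔸) :
    Continuous fun p : 𝔸 × 𝔸 => ∫ s in (0 : ℝ)..1, exp (s • p.1) * p.2 * exp ((1 - s) • A) := by
  have := continuous_exp_of_real (𝔸 := 𝔸)
  apply intervalIntegral.continuous_parametric_intervalIntegral_of_continuous'
  unfold Function.uncurry
  fun_prop

theorem exp_sub_exp_eq_integral (A B : 𝔸) :
    exp B - exp A = ∫ s in (0 : ℝ)..1, exp (s • B) * (B - A) * exp ((1 - s) • A) := by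
  have := continuous_exp_of_real (𝔸 := 𝔸)
  have hcont : Continuous fun s : ℝ => exp (s • B) * (B - A) * exp ((1 - s) • A) := by fun_prop
  rw [intervalIntegral.integral_eq_sub_of_hasDerivAt
    (fun s _ => hasDerivAt_exp_smul_mul_exp_one_sub_smul A B s) (hcont.intervalIntegrable 0 1)]
  simp

theorem slope_exp_comp_eq_integral (f : ℝ → 𝔸) (t u : ℝ) :
    slope (fun u => exp (f u)) t u =
      ∫ s in (0 : ℝ)..1, exp (s • f u) * slope f t u * exp ((1 - s) • f t) := by
  simp only [slope_def_module]
  rw [exp_sub_exp_eq_integral, ← intervalIntegral.integral_smul]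
  congr with s
  rw [mul_smul_comm, smul_mul_assoc]

theorem _root_.HasDerivAt.exp_duhamel {f : ℝ → 𝔸} {f' : 𝔸} {t : ℝ} (hf : HasDerivAt f f' t) :
    HasDerivAt (fun u => NormedSpace.exp (f u))
      (∫ s in (0 : ℝ)..1, NormedSpace.exp (s • f t) * f' * NormedSpace.exp ((1 - s) • f t)) t := by
  have hf_tendsto : Tendsto f (𝓝[≠] t) (𝓝 (f t)) :=
    hf.continuousAt.tendsto.mono_left nhdsWithin_le_nhds
  rw [hasDerivAt_iff_tendsto_slope] at hf ⊢
  rw [funext (slope_exp_comp_eq_integral f t)]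
  exact (continuous_integral_exp_smul_mul_mul_exp_smul (f t)).continuousAt.tendsto.comp
    (hf_tendsto.prodMk_nhds hf)

end NormedSpace

/-- Duhamel's formula: if `Ω : ℝ → Mₙ(ℂ)` is differentiable with derivative
`Ω'`, then `t ↦ exp(Ω(t))` is differentiable with derivative
`∫_0^1 exp(sΩ(t)) Ω'(t) exp((1−s)Ω(t)) ds`. -/
theorem hasDerivAt_matrix_exp {n : ℕ} (Ω Ω' : ℝ → Matrix (Fin n) (Fin n) ℂ)
    (hΩ : ∀ t, HasDerivAt Ω (Ω' t) t) (t : ℝ) :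
    HasDerivAt (fun u => NormedSpace.exp (Ω u))
      (∫ s in (0:ℝ)..1,
        NormedSpace.exp (s • Ω t) * Ω' t * NormedSpace.exp ((1 - s) • Ω t)) t :=
  (hΩ t).exp_duhamel
end

section
/- Let Ω : ℝ → M_n(ℂ) be a differentiable matrix-valued function. Then for every t: exp(−Ω(t)) · (d/dt exp(Ω(t))) = Σ_{k=0}^{∞} (1/(k+1)!) · (−ad_{Ω(t)})^{k} (Ω'(t)), where the series converges absolutely in operator norm. -/
/-!
Write `L` and `R` for left and right multiplication by `a`; they commute, `R - L = -ad a`, and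
left multiplication by `exp (-a)` is `exp (-L)`. Differentiating the exponential series termwise,
the derivative of `exp` at `a` is `∑ₙ (1/n!) ∑_{i<n} R^i L^(n-1-i)`, formally
`(exp R - exp L) / (R - L)`. The theorem is therefore the identity
`exp (-y) * (exp x - exp y) / (x - y) = (exp (x - y) - 1) / (x - y) = ∑ₖ (x - y)^k / (k+1)!`
for commuting `x`, `y`. After a Cauchy product it becomes a polynomial identity in each degree;
multiplied by `x - y` it is the binomial theorem, so it holds in the domain `ℤ[X][Y]`, and hence
for any pair of commuting elements.
-/

open scoped Nat Matrix.Norms.L2Operator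

open Finset ContinuousLinearMap
open scoped RightActions

section DividedDifference

variable {R : Type*}

theorem sum_antidiagonal_choose_nsmul_neg_pow_mul_geom_sum₂_of_ne [CommRing R] [IsDomain R]
    {x y : R} (hxy : x ≠ y) (m : ℕ) :
    ∑ pq ∈ antidiagonal (m + 1), (m + 1).choose pq.1 •
      ((-y) ^ pq.1 * ∑ i ∈ range pq.2, x ^ i * y ^ (pq.2 - 1 - i)) = (x - y) ^ m := by
  refine mul_right_cancel₀ (sub_ne_zero.2 hxy) ?_
  calc _ = ∑ pq ∈ antidiagonal (m + 1), (m + 1).choose pq.1 • ((-y) ^ pq.1 * x ^ pq.2)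
          - ∑ pq ∈ antidiagonal (m + 1), (m + 1).choose pq.1 • ((-y) ^ pq.1 * y ^ pq.2) := by
        rw [sum_mul, ← sum_sub_distrib]
        refine sum_congr rfl fun pq _ => ?_
        rw [smul_mul_assoc, mul_assoc, geom_sum₂_mul, mul_sub, smul_sub]
    _ = (-y + x) ^ (m + 1) - (-y + y) ^ (m + 1) := by
        rw [(Commute.all _ _).add_pow', (Commute.all _ _).add_pow']
    _ = (x - y) ^ m * (x - y) := by
        rw [neg_add_cancel, zero_pow m.succ_ne_zero, neg_add_eq_sub, sub_zero, pow_succ]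

open Polynomial in
theorem Commute.sum_antidiagonal_choose_nsmul_neg_pow_mul_geom_sum₂ [Ring R] {x y : R}
    (h : Commute x y) (m : ℕ) :
    ∑ pq ∈ antidiagonal (m + 1), (m + 1).choose pq.1 •
      ((-y) ^ pq.1 * ∑ i ∈ range pq.2, x ^ i * y ^ (pq.2 - 1 - i)) = (x - y) ^ m := by
  have hy : ∀ p : ℤ[X], Commute (aeval y p) x := fun p => by
    induction p using Polynomial.induction_on' with
    | add p q hp hq => simpa using hp.add_left hq
    | monomial n c =>
      simpa [aeval_monomial] using (Int.cast_commute c x).mul_left (h.symm.pow_left n)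
  have := congrArg (eval₂RingHom' (aeval y).toRingHom x hy)
    (sum_antidiagonal_choose_nsmul_neg_pow_mul_geom_sum₂_of_ne (X_ne_C (X : ℤ[X])) m)
  simp only [map_sum, map_nsmul, map_mul, map_pow, map_neg, map_sub] at this
  simpa using this

variable {𝕂 : Type*} [Field 𝕂]

theorem Commute.sum_antidiagonal_inv_factorial_smul_neg_pow_mul_geom_sum₂ [CharZero 𝕂] [Ring R]
    [Algebra 𝕂 R] {x y : R} (h : Commute x y) (m : ℕ) :
    ∑ pq ∈ antidiagonal (m + 1), ((pq.1 ! : 𝕂)⁻¹ • (-y) ^ pq.1) *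
      ((pq.2 ! : 𝕂)⁻¹ • ∑ i ∈ range pq.2, x ^ i * y ^ (pq.2 - 1 - i)) =
      ((m + 1)! : 𝕂)⁻¹ • (x - y) ^ m := by
  rw [← h.sum_antidiagonal_choose_nsmul_neg_pow_mul_geom_sum₂, smul_sum]
  refine sum_congr rfl fun pq hpq => ?_
  rw [HasAntidiagonal.mem_antidiagonal] at hpq
  rw [smul_mul_smul_comm, ← Nat.cast_smul_eq_nsmul 𝕂, smul_smul, ← hpq, Nat.cast_add_choose]
  congr 1
  field_simp [(pq.1 + pq.2).factorial_ne_zero]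

variable (𝕂) in
/-- Formally `(exp x - exp y) / (x - y)`. -/
noncomputable def expDivDiff {B : Type*} [Ring B] [Algebra 𝕂 B] [TopologicalSpace B] (x y : B) :
    B :=
  ∑' n : ℕ, (n ! : 𝕂)⁻¹ • ∑ i ∈ range n, x ^ i * y ^ (n - 1 - i)

end DividedDifference

theorem summable_inv_factorial_mul_nat_mul_pow_pred (r : ℝ) :
    Summable fun n : ℕ => (n ! : ℝ)⁻¹ * (n * r ^ (n - 1)) := by
  rw [← summable_nat_add_iff 1]
  refine (Real.summable_pow_div_factorial r).congr fun n => ?_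
  rw [Nat.add_sub_cancel, Nat.factorial_succ]
  push_cast
  field_simp

section Operators

variable {𝕂 E : Type*} [RCLike 𝕂] [NormedAddCommGroup E] [NormedSpace 𝕂 E]

namespace ContinuousLinearMap

theorem norm_pow_le_pow_norm (T : E →L[𝕂] E) : ∀ k : ℕ, ‖T ^ k‖ ≤ ‖T‖ ^ k
  | 0 => by simpa [← one_def] using norm_id_le
  | k + 1 => norm_pow_le' T k.succ_pos

theorem norm_geom_sum₂_le {x y : E →L[𝕂] E} {r : ℝ} (hx : ‖x‖ ≤ r) (hy : ‖y‖ ≤ r) (n : ℕ) :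
    ‖∑ i ∈ range n, x ^ i * y ^ (n - 1 - i)‖ ≤ n * r ^ (n - 1) := by
  have hr : 0 ≤ r := (norm_nonneg x).trans hx
  calc ‖∑ i ∈ range n, x ^ i * y ^ (n - 1 - i)‖ ≤ ∑ i ∈ range n, r ^ (n - 1) := by
        refine (norm_sum_le _ _).trans (sum_le_sum fun i hi => ?_)
        calc ‖x ^ i * y ^ (n - 1 - i)‖ ≤ ‖x‖ ^ i * ‖y‖ ^ (n - 1 - i) :=
              (norm_mul_le _ _).trans (mul_le_mul (x.norm_pow_le_pow_norm i)
                (y.norm_pow_le_pow_norm _) (norm_nonneg _) (by positivity))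
          _ ≤ r ^ i * r ^ (n - 1 - i) := by gcongr
          _ = r ^ (n - 1) := by rw [← pow_add, Nat.add_sub_cancel' (by grind)]
    _ = n * r ^ (n - 1) := by simp

theorem norm_inv_factorial_smul_geom_sum₂_le {x y : E →L[𝕂] E} {r : ℝ} (hx : ‖x‖ ≤ r)
    (hy : ‖y‖ ≤ r) (n : ℕ) :
    ‖(n ! : 𝕂)⁻¹ • ∑ i ∈ range n, x ^ i * y ^ (n - 1 - i)‖ ≤ (n ! : ℝ)⁻¹ * (n * r ^ (n - 1)) := by
  rw [norm_smul, norm_inv, RCLike.norm_natCast]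
  gcongr
  exact norm_geom_sum₂_le hx hy n

end ContinuousLinearMap

theorem Commute.hasSum_exp_neg_mul_expDivDiff [CompleteSpace E] {x y : E →L[𝕂] E}
    (h : Commute x y) :
    HasSum (fun k : ℕ => ((k + 1)! : 𝕂)⁻¹ • (x - y) ^ k)
      (NormedSpace.exp (-y) * expDivDiff 𝕂 x y) := by
  set f := fun p : ℕ => (p ! : 𝕂)⁻¹ • (-y) ^ p
  set g := fun q : ℕ => (q ! : 𝕂)⁻¹ • ∑ i ∈ range q, x ^ i * y ^ (q - 1 - i)
  have hf : Summable (‖f ·‖) := NormedSpace.norm_expSeries_summable' (-y)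
  have hg : Summable (‖g ·‖) :=
    (summable_inv_factorial_mul_nat_mul_pow_pred (max ‖x‖ ‖y‖)).of_nonneg_of_le
      (fun _ => norm_nonneg _)
      (norm_inv_factorial_smul_geom_sum₂_le (le_max_left _ _) (le_max_right _ _))
  have hprod : HasSum (fun n => ∑ pq ∈ antidiagonal n, f pq.1 * g pq.2)
      (NormedSpace.exp (-y) * expDivDiff 𝕂 x y) := by
    rw [NormedSpace.exp_eq_tsum 𝕂, expDivDiff,
      tsum_mul_tsum_eq_tsum_sum_antidiagonal_of_summable_norm hf hg]
    exact (summable_norm_sum_mul_antidiagonal_of_summable_norm hf hg).of_norm.hasSum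
  have h0 : ∑ pq ∈ antidiagonal 0, f pq.1 * g pq.2 = 0 := by simp [g]
  rw [← hasSum_nat_add_iff' 1, sum_range_one, h0, sub_zero] at hprod
  simpa only [f, g, h.sum_antidiagonal_inv_factorial_smul_neg_pow_mul_geom_sum₂] using hprod

end Operators

section BanachAlgebra

variable {𝕂 𝔸 : Type*} [RCLike 𝕂] [NormedRing 𝔸] [NormedAlgebra 𝕂 𝔸]

namespace ContinuousLinearMap

theorem mul_pow_apply (a h : 𝔸) (k : ℕ) : (mul 𝕂 𝔸 a ^ k) h = a ^ k * h := by
  induction k with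
  | zero => simp
  | succ k ih => rw [pow_succ', mul_apply_eq_comp, ih, mul_apply', pow_succ', mul_assoc]

theorem flip_mul_pow_apply (a h : 𝔸) (k : ℕ) : ((mul 𝕂 𝔸).flip a ^ k) h = h * a ^ k := by
  induction k generalizing h with
  | zero => simp
  | succ k ih =>
    rw [pow_succ, mul_apply_eq_comp, flip_apply, mul_apply', ih, pow_succ', mul_assoc]

theorem opNorm_flip_mul_apply_le (a : 𝔸) : ‖(mul 𝕂 𝔸).flip a‖ ≤ ‖a‖ :=
  opNorm_le_bound _ (norm_nonneg a) fun h => by simpa [mul_comm ‖a‖] using norm_mul_le h a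

theorem commute_mul_flip_mul (a b : 𝔸) : Commute (mul 𝕂 𝔸 a) ((mul 𝕂 𝔸).flip b) :=
  ext fun h => (mul_assoc a h b).symm

theorem exp_mul_apply [CompleteSpace 𝔸] (a h : 𝔸) :
    NormedSpace.exp (mul 𝕂 𝔸 a) h = NormedSpace.exp a * h := by
  have hL := (NormedSpace.exp_series_hasSum_exp' (𝕂 := 𝕂) (mul 𝕂 𝔸 a)).mapL (apply 𝕂 𝔸 h)
  have hA := (NormedSpace.exp_series_hasSum_exp' (𝕂 := 𝕂) a).mul_right h
  refine hL.unique ?_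
  simpa only [apply_apply, smul_apply, mul_pow_apply, smul_mul_assoc] using hA

theorem iterate_neg_commutator_eq_pow_apply (a h : 𝔸) (k : ℕ) :
    (fun X => -(a * X - X * a))^[k] h = (((mul 𝕂 𝔸).flip a - mul 𝕂 𝔸 a) ^ k) h := by
  induction k with
  | zero => simp
  | succ k ih =>
    rw [Function.iterate_succ_apply', ih, pow_succ', mul_apply_eq_comp, sub_apply, flip_apply,
      mul_apply', mul_apply', neg_sub]

end ContinuousLinearMap

theorem hasFDerivAt_exp_expDivDiff [CompleteSpace 𝔸] (a : 𝔸) :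
    HasFDerivAt NormedSpace.exp (expDivDiff 𝕂 ((mul 𝕂 𝔸).flip a) (mul 𝕂 𝔸 a)) a := by
  set r := ‖a‖ + 1
  have ha : a ∈ Metric.ball (0 : 𝔸) r := by simp [r]
  let : NormedSpace ℝ 𝔸 := NormedSpace.restrictScalars ℝ 𝕂 𝔸
  rw [NormedSpace.exp_eq_tsum 𝕂, expDivDiff]
  refine hasFDerivAt_tsum_of_isPreconnected (f := fun n X => (n ! : 𝕂)⁻¹ • X ^ n)
    (f' := fun n X => (n ! : 𝕂)⁻¹ • ∑ i ∈ range n, (mul 𝕂 𝔸).flip X ^ i * mul 𝕂 𝔸 X ^ (n - 1 - i))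
    (summable_inv_factorial_mul_nat_mul_pow_pred r) Metric.isOpen_ball
    (convex_ball 0 r).isPreconnected (fun n X _ => ?_) (fun n X hX => ?_) ha
    (NormedSpace.expSeries_summable' a) ha
  · refine ((hasFDerivAt_pow' n).const_smul (n ! : 𝕂)⁻¹).congr_fderiv ?_
    congr 1
    refine sum_congr rfl fun i _ => ext fun h => ?_
    rw [mul_apply_eq_comp, mul_pow_apply, flip_mul_pow_apply]
    simp
  · have hXr : ‖X‖ ≤ r := (mem_ball_zero_iff.1 hX).le
    exact norm_inv_factorial_smul_geom_sum₂_le ((opNorm_flip_mul_apply_le X).trans hXr)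
      ((opNorm_mul_apply_le 𝕂 𝔸 X).trans hXr) n

theorem hasSum_exp_neg_mul_fderiv_exp [CompleteSpace 𝔸] (a h : 𝔸) :
    HasSum (fun k : ℕ => ((k + 1)! : 𝕂)⁻¹ • (fun X => -(a * X - X * a))^[k] h)
      (NormedSpace.exp (-a) * fderiv 𝕂 NormedSpace.exp a h) ∧
    Summable fun k : ℕ => ‖((k + 1)! : 𝕂)⁻¹ • (fun X => -(a * X - X * a))^[k] h‖ := by
  set L := mul 𝕂 𝔸 a
  set R := (mul 𝕂 𝔸).flip a
  have hsum := (commute_mul_flip_mul (𝕂 := 𝕂) a a).symm.hasSum_exp_neg_mul_expDivDiff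
  simp_rw [iterate_neg_commutator_eq_pow_apply (𝕂 := 𝕂)]
  rw [(hasFDerivAt_exp_expDivDiff a).fderiv, ← exp_mul_apply (𝕂 := 𝕂), map_neg]
  refine ⟨by simpa using hsum.mapL (apply 𝕂 𝔸 h), ?_⟩
  refine ((Real.summable_pow_div_factorial ‖R - L‖).mul_right ‖h‖).of_nonneg_of_le
    (fun _ => norm_nonneg _) fun k => ?_
  rw [norm_smul, norm_inv, RCLike.norm_natCast]
  calc ((k + 1)! : ℝ)⁻¹ * ‖((R - L) ^ k) h‖ ≤ (k ! : ℝ)⁻¹ * (‖R - L‖ ^ k * ‖h‖) := by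
        gcongr
        · exact k.le_succ
        · exact (le_opNorm _ _).trans (by gcongr; exact norm_pow_le_pow_norm _ k)
    _ = ‖R - L‖ ^ k / k ! * ‖h‖ := by ring

end BanachAlgebra

/-- if `Ω : ℝ → Mₙ(ℂ)` is differentiable with derivative `Ω'`, then
`exp(−Ω(t)) · (d/dt exp(Ω(t))) = Σ_{k=0}^∞ (1/(k+1)!) (−ad_{Ω(t)})^k (Ω'(t))`,
the series converging absolutely in operator norm. -/
theorem exp_neg_mul_deriv_exp_eq_ad_series {n : ℕ} (Ω Ω' : ℝ → Matrix (Fin n) (Fin n) ℂ)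
    (hΩ : ∀ t, HasDerivAt Ω (Ω' t) t) (t : ℝ) :
    HasSum
      (fun k : ℕ => (((k + 1)! : ℂ))⁻¹ •
        ((fun X => -(Ω t * X - X * Ω t))^[k] (Ω' t)))
      (NormedSpace.exp (-(Ω t)) * deriv (fun u => NormedSpace.exp (Ω u)) t) ∧
    Summable
      (fun k : ℕ => ‖(((k + 1)! : ℂ))⁻¹ •
        ((fun X => -(Ω t * X - X * Ω t))^[k] (Ω' t))‖) := by
  have hexp : HasDerivAt (fun u => NormedSpace.exp (Ω u))
      (fderiv ℂ NormedSpace.exp (Ω t) (Ω' t)) t :=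
    ((hasFDerivAt_exp_expDivDiff (Ω t)).differentiableAt.hasFDerivAt.restrictScalars ℝ
      ).comp_hasDerivAt t (hΩ t)
  rw [hexp.deriv]
  exact hasSum_exp_neg_mul_fderiv_exp (Ω t) (Ω' t)
end

section
/- Let T > 0 and let H : ℝ → M_n(ℂ) be a continuous, T-periodic, Hermitian-matrix-valued function. Let U : ℝ → M_n(ℂ) be the solution of i·U'(t) = H(t)·U(t) with U(0) = I. Then every U(t) is unitary, and there exist a Hermitian matrix H_F and a T-periodic map P : ℝ → M_n(ℂ) taking unitary values with P(0) = I, such that U(t) = P(t) · exp(−i·H_F·t) for all t ∈ ℝ (Floquet decomposition). -/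
/-!
For two solutions `U`, `V` of `U' = -i H U` the product `U(t)* V(t)` is constant, because `H(t)`
is Hermitian. With `V = U` this makes `U` unitary; with `V(t) = U(t + T)`, again a solution since
`H` is `T`-periodic, it gives the monodromy relation `U(t + T) = U(t) U(T)`. The unitary `U(T)`
has finite spectrum, so `arg` applied through the continuous functional calculus yields a
Hermitian `H_F` with `U(T) = exp(-i T H_F)`, and `P(t) = U(t) exp(i t H_F)` is `T`-periodic.
-/

open scoped Matrix.Norms.L2Operator
open Complex NormedSpace selfAdjoint Unitary

lemma expUnitary_argSelfAdjoint_of_finite_spectrum {A : Type*} [CStarAlgebra A] {u : unitary A}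
    (hu : (spectrum ℂ (u : A)).Finite) : expUnitary (argSelfAdjoint u) = u := by
  ext
  have : ContinuousOn arg (spectrum ℂ (u : A)) := hu.continuousOn _
  rw [expUnitary_coe, argSelfAdjoint_coe, ← CFC.exp_eq_normedSpace_exp (𝕜 := ℂ),
    ← cfc_comp_smul .., ← cfc_comp' ..]
  conv_rhs => rw [← cfc_id' ℂ (u : A)]
  refine cfc_congr fun y hy ↦ ?_
  simpa [← exp_eq_exp_ℂ, mul_comm I, spectrum.norm_eq_one_of_unitary u.2 hy] using
    norm_mul_exp_arg_mul_I y

lemma AddChar.periodic_mul_map_neg {G M : Type*} [AddCommGroup G] [Monoid M] (E : AddChar G M)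
    {U : G → M} {T : G} (hU : ∀ t, U (t + T) = U t * E T) :
    Function.Periodic (fun t ↦ U t * E (-t)) T := fun t ↦ by
  dsimp only
  rw [hU, neg_add_rev, map_add_eq_mul, mul_assoc, ← mul_assoc (E T), ← map_add_eq_mul,
    add_neg_cancel, map_zero_eq_one, one_mul]

lemma AddChar.mul_map_neg_mul_map {G M : Type*} [AddGroup G] [Monoid M] (E : AddChar G M)
    (x : M) (t : G) : x * E (-t) * E t = x := by
  rw [mul_assoc, ← map_add_eq_mul, neg_add_cancel, map_zero_eq_one, mul_one]

section Schrodinger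

variable {A : Type*} [NormedRing A] [NormedAlgebra ℂ A]

def IsSchrodingerSolution (H U : ℝ → A) : Prop := ∀ t, HasDerivAt U (-I • (H t * U t)) t

noncomputable def constPropagator [CompleteSpace A] (HF : A) : AddChar ℝ A where
  toFun t := exp ((-I * t) • HF)
  map_zero_eq_one' := by simp
  map_add_eq_mul' s t := by
    let : NormedAlgebra ℚ A := .restrictScalars ℚ ℂ A
    rw [← exp_add_of_commute (((Commute.refl HF).smul_left _).smul_right _), ← add_smul]
    push_cast
    ring_nf

namespace IsSchrodingerSolution

variable {H U V : ℝ → A}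

lemma comp_add_const {T : ℝ} (hper : ∀ t, H (t + T) = H t) (hU : IsSchrodingerSolution H U) :
    IsSchrodingerSolution H (fun t ↦ U (t + T)) := fun t ↦ by
  simpa [hper] using (hU (t + T)).comp_add_const t T

variable [StarRing A] [StarModule ℂ A] [ContinuousStar A]

lemma hasDerivAt_star_mul (hH : ∀ t, IsSelfAdjoint (H t)) (hU : IsSchrodingerSolution H U)
    (hV : IsSchrodingerSolution H V) (t : ℝ) :
    HasDerivAt (fun s ↦ star (U s) * V s) 0 t := by
  refine ((hU t).star.mul (hV t)).congr_deriv ?_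
  rw [star_smul, star_mul, (hH t).star_eq, smul_mul_assoc, mul_smul_comm, mul_assoc]
  simp

lemma star_mul_eq (hH : ∀ t, IsSelfAdjoint (H t)) (hU : IsSchrodingerSolution H U)
    (hV : IsSchrodingerSolution H V) (t : ℝ) : star (U t) * V t = star (U 0) * V 0 :=
  is_const_of_deriv_eq_zero (fun s ↦ (hasDerivAt_star_mul hH hU hV s).differentiableAt)
    (fun s ↦ (hasDerivAt_star_mul hH hU hV s).deriv) t 0

lemma star_mul_self (hH : ∀ t, IsSelfAdjoint (H t)) (hU : IsSchrodingerSolution H U)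
    (hU0 : U 0 = 1) (t : ℝ) : star (U t) * U t = 1 := by
  rw [star_mul_eq hH hU hU t, hU0, star_one, one_mul]

lemma map_add_eq_mul {T t : ℝ} (hH : ∀ t, IsSelfAdjoint (H t)) (hper : ∀ t, H (t + T) = H t)
    (hU : IsSchrodingerSolution H U) (hU0 : U 0 = 1) (hUt : U t ∈ unitary A) :
    U (t + T) = U t * U T := by
  have hconst := star_mul_eq hH hU (hU.comp_add_const hper) t
  simp only [zero_add, hU0, star_one, one_mul] at hconst
  rw [← hconst, ← mul_assoc, Unitary.mul_star_self_of_mem hUt, one_mul]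

end IsSchrodingerSolution

lemma constPropagator_mem_unitary [StarRing A] [StarModule ℂ A] [ContinuousStar A]
    [CompleteSpace A] {HF : A} (hHF : IsSelfAdjoint HF) (t : ℝ) :
    constPropagator HF t ∈ unitary A := by
  let : NormedAlgebra ℚ A := .restrictScalars ℚ ℂ A
  refine exp_mem_unitary_of_mem_skewAdjoint (hHF.smul_mem_skewAdjoint ?_)
  simp [skewAdjoint.mem_iff]

end Schrodinger

lemma exists_isSelfAdjoint_constPropagator_eq {A : Type*} [CStarAlgebra A] {u : A}
    (hu : u ∈ unitary A) (hfin : (spectrum ℂ u).Finite) {T : ℝ} (hT : T ≠ 0) :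
    ∃ HF : A, IsSelfAdjoint HF ∧ constPropagator HF T = u := by
  set a := argSelfAdjoint ⟨u, hu⟩
  refine ⟨(-T⁻¹ : ℝ) • (a : A), (IsSelfAdjoint.all _).smul a.2, ?_⟩
  have hscale : (-I * T) • (-T⁻¹ : ℝ) • (a : A) = I • (a : A) := by
    have hT' : (T : ℂ) ≠ 0 := ofReal_ne_zero.mpr hT
    rw [← algebraMap_smul ℂ (-T⁻¹), smul_smul, Complex.coe_algebraMap]
    congr 1
    push_cast
    field_simp
  change NormedSpace.exp _ = u
  rw [hscale, ← expUnitary_coe, expUnitary_argSelfAdjoint_of_finite_spectrum hfin]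

theorem floquet_decomposition_general {n : ℕ} (T : ℝ) (hT : 0 < T)
    (H : ℝ → Matrix (Fin n) (Fin n) ℂ)
    (hHper : ∀ t, H (t + T) = H t) (hHherm : ∀ t, (H t).IsHermitian)
    (U : ℝ → Matrix (Fin n) (Fin n) ℂ) (hU0 : U 0 = 1)
    (hU : ∀ t, HasDerivAt U (-Complex.I • (H t * U t)) t) :
    (∀ t, U t ∈ Matrix.unitaryGroup (Fin n) ℂ) ∧
    ∃ (HF : Matrix (Fin n) (Fin n) ℂ) (P : ℝ → Matrix (Fin n) (Fin n) ℂ),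
      HF.IsHermitian ∧ (∀ t, P (t + T) = P t) ∧ P 0 = 1 ∧
      (∀ t, P t ∈ Matrix.unitaryGroup (Fin n) ℂ) ∧
      ∀ t : ℝ, U t = P t * NormedSpace.exp ((-Complex.I * (t : ℂ)) • HF) := by
  have hU' : IsSchrodingerSolution H U := hU
  have hunit (t : ℝ) : U t ∈ Matrix.unitaryGroup (Fin n) ℂ :=
    Matrix.mem_unitaryGroup_iff'.mpr (hU'.star_mul_self hHherm hU0 t)
  obtain ⟨HF, hHF, hmonodromy⟩ :=
    exists_isSelfAdjoint_constPropagator_eq (hunit T) (Matrix.finite_spectrum _) hT.ne'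
  set E := constPropagator HF
  have hshift (t : ℝ) : U (t + T) = U t * E T :=
    hmonodromy ▸ hU'.map_add_eq_mul hHherm hHper hU0 (hunit t)
  refine ⟨hunit, HF, fun t ↦ U t * E (-t), hHF, E.periodic_mul_map_neg hshift, by simp [hU0],
    fun t ↦ mul_mem (hunit t) (constPropagator_mem_unitary hHF _),
    fun t ↦ (E.mul_map_neg_mul_map (U t) t).symm⟩

/-- Floquet decomposition: let `T > 0` and `H : ℝ → Mₙ(ℂ)` be continuous,
`T`-periodic, Hermitian-valued, and let `U` solve `i U'(t) = H(t) U(t)`, `U(0) = I`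
(i.e. `U'(t) = −i H(t) U(t)`). Then every `U(t)` is unitary, and there are a Hermitian
matrix `H_F` and a `T`-periodic unitary-valued `P` with `P(0) = I` such that
`U(t) = P(t) exp(−i H_F t)` for all `t`. -/
theorem floquet_decomposition {n : ℕ} (T : ℝ) (hT : 0 < T)
    (H : ℝ → Matrix (Fin n) (Fin n) ℂ) (hHcont : Continuous H)
    (hHper : ∀ t, H (t + T) = H t) (hHherm : ∀ t, (H t).IsHermitian)
    (U : ℝ → Matrix (Fin n) (Fin n) ℂ) (hU0 : U 0 = 1)
    (hU : ∀ t, HasDerivAt U (-Complex.I • (H t * U t)) t) :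
    (∀ t, U t ∈ Matrix.unitaryGroup (Fin n) ℂ) ∧
    ∃ (HF : Matrix (Fin n) (Fin n) ℂ) (P : ℝ → Matrix (Fin n) (Fin n) ℂ),
      HF.IsHermitian ∧ (∀ t, P (t + T) = P t) ∧ P 0 = 1 ∧
      (∀ t, P t ∈ Matrix.unitaryGroup (Fin n) ℂ) ∧
      ∀ t : ℝ, U t = P t * NormedSpace.exp ((-Complex.I * (t : ℂ)) • HF) :=
  floquet_decomposition_general T hT H hHper hHherm U hU0 hU
end

section
/- Let T > 0, let H₀ ∈ M_n(ℂ), and let V : ℝ → M_n(ℂ) be continuous with ∫_{0}^{T} V(t) dt = 0. Define W(t) := ∫_{0}^{t} V(s) ds. Then (i/T) · ∫_{0}^{T} [W(t), H₀ + (1/2)·V(t)] dt = (−i/(2T)) · ∫_{0}^{T} ∫_{0}^{t₁} [H₀ + V(t₁), H₀ + V(t₂)] dt₂ dt₁; that is, the time average of the first-order correction H^{(1)}(t) = −[Ω₁(t), H₀] − (1/2)[Ω₁(t), V(t)] with Ω₁(t) = −i·W(t) coincides with the second-order term of the Magnus expansion of the one-period evolution. -/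
/-!
Let `W` be the primitive of `V` from `0` and `H t = H₀ + V t`. The inner Magnus integral is
`∫₀ᵗ ⁅H t, H s⁆ ds = ⁅H₀ + V t, t • H₀ + W t⁆`, and pointwise
`⁅W t, H₀ + V t / 2⁆ + ⁅H₀ + V t, t • H₀ + W t⁆ / 2 = ⁅t • V t + W t, H₀⁆ / 2`,
which is half the derivative of `t ↦ ⁅t • W t, H₀⁆`. That function vanishes at `0` and, since
`W T = 0`, at `T`; so the first-order integrand integrates to `-1/2` times the Magnus one.
-/

open MeasureTheory

attribute [local instance] LieRing.ofAssociativeRing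

@[fun_prop]
theorem Continuous.lie {X A : Type*} [TopologicalSpace X] [Ring A] [TopologicalSpace A]
    [IsTopologicalRing A] {f g : X → A} (hf : Continuous f) (hg : Continuous g) :
    Continuous fun x => ⁅f x, g x⁆ := by
  simp only [Ring.lie_def]
  fun_prop

namespace intervalIntegral

section Lie

variable {A : Type*} [NormedRing A] [NormedAlgebra ℝ A] [CompleteSpace A] {f : ℝ → A} {a b : ℝ}

theorem integral_const_lie (c : A) (hf : IntervalIntegrable f volume a b) :
    ∫ t in a..b, ⁅c, f t⁆ = ⁅c, ∫ t in a..b, f t⁆ := by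
  simpa [Ring.lie_def] using
    (ContinuousLinearMap.mul ℝ A c - (ContinuousLinearMap.mul ℝ A).flip c).intervalIntegral_comp_comm
      hf

theorem integral_lie_const (c : A) (hf : IntervalIntegrable f volume a b) :
    ∫ t in a..b, ⁅f t, c⁆ = ⁅∫ t in a..b, f t, c⁆ := by
  rw [← lie_skew, ← integral_const_lie c hf, ← integral_neg]
  simp only [lie_skew]

end Lie

theorem integral_smul_add_primitive {E : Type*} [NormedAddCommGroup E] [NormedSpace ℝ E]
    [CompleteSpace E] {f : ℝ → E} (hf : Continuous f) (a b : ℝ) :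
    ∫ t in a..b, (t • f t + ∫ s in a..t, f s) = b • ∫ s in a..b, f s := by
  have hderiv (t : ℝ) :
      HasDerivAt (fun u => u • ∫ s in a..u, f s) (t • f t + ∫ s in a..t, f s) t := by
    simpa only [one_smul] using
      (hasDerivAt_id' t).fun_smul (hf.integral_hasStrictDerivAt a t).hasDerivAt
  rw [integral_eq_sub_of_hasDerivAt (fun t _ => hderiv t)]
  · simp
  · exact ((continuous_id.smul hf).add
      (continuous_primitive (fun _ _ => hf.intervalIntegrable _ _) a)).intervalIntegrable _ _

end intervalIntegral

open intervalIntegral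

section Magnus

variable {A : Type*} [NormedRing A] [NormedAlgebra ℂ A]

theorem lie_add_half_smul_lie_eq_half_smul_lie (H₀ W V : A) (t : ℝ) :
    ⁅W, H₀ + (1 / 2 : ℂ) • V⁆ + (1 / 2 : ℂ) • ⁅H₀ + V, t • H₀ + W⁆ =
      (1 / 2 : ℂ) • ⁅t • V + W, H₀⁆ := by
  simp only [lie_add, add_lie, lie_smul, smul_lie, lie_self, smul_add, ← lie_skew W]
  module

variable [CompleteSpace A]

theorem integral_lie_primitive_eq_neg_half_magnus {T : ℝ} (H₀ : A) {V : ℝ → A}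
    (hV : Continuous V) (hVT : ∫ t in 0..T, V t = 0) :
    ∫ t in 0..T, ⁅∫ s in 0..t, V s, H₀ + (1 / 2 : ℂ) • V t⁆ =
      -(1 / 2 : ℂ) • ∫ t₁ in 0..T, ∫ t₂ in 0..t₁, ⁅H₀ + V t₁, H₀ + V t₂⁆ := by
  set W : ℝ → A := fun t => ∫ s in 0..t, V s
  have hW : Continuous W := continuous_primitive (fun _ _ => hV.intervalIntegrable _ _) 0
  have inner (t : ℝ) :
      ∫ t₂ in 0..t, ⁅H₀ + V t, H₀ + V t₂⁆ = ⁅H₀ + V t, t • H₀ + W t⁆ := by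
    rw [integral_const_lie (f := fun s => H₀ + V s) _
        ((continuous_const.add hV).intervalIntegrable _ _),
      intervalIntegral.integral_add intervalIntegrable_const (hV.intervalIntegrable _ _),
      intervalIntegral.integral_const, sub_zero]
  have hsum : ∫ t in 0..T,
      (⁅W t, H₀ + (1 / 2 : ℂ) • V t⁆ + (1 / 2 : ℂ) • ⁅H₀ + V t, t • H₀ + W t⁆) = 0 := by
    simp_rw [lie_add_half_smul_lie_eq_half_smul_lie, intervalIntegral.integral_smul]
    rw [integral_lie_const (f := fun t => t • V t + W t) _
        (((continuous_id.smul hV).add hW).intervalIntegrable _ _),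
      integral_smul_add_primitive hV, hVT]
    simp
  simp_rw [inner]
  rw [intervalIntegral.integral_add ((by fun_prop : Continuous _).intervalIntegrable _ _)
    ((by fun_prop : Continuous _).intervalIntegrable _ _), intervalIntegral.integral_smul] at hsum
  rw [neg_smul]
  exact eq_neg_of_add_eq_zero_left hsum

end Magnus

open scoped Matrix.Norms.L2Operator

theorem first_order_average_eq_magnus_second_order_general {n : ℕ} (T : ℝ)
    (H₀ : Matrix (Fin n) (Fin n) ℂ) (V : ℝ → Matrix (Fin n) (Fin n) ℂ)
    (hVcont : Continuous V) (hVavg : ∫ t in (0:ℝ)..T, V t = 0) :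
    ((Complex.I / (T : ℂ)) •
        ∫ t in (0:ℝ)..T,
          ((∫ s in (0:ℝ)..t, V s) * (H₀ + (1 / 2 : ℂ) • V t) -
            (H₀ + (1 / 2 : ℂ) • V t) * ∫ s in (0:ℝ)..t, V s)) =
      (-Complex.I / (2 * (T : ℂ))) •
        ∫ t₁ in (0:ℝ)..T, ∫ t₂ in (0:ℝ)..t₁,
          ((H₀ + V t₁) * (H₀ + V t₂) - (H₀ + V t₂) * (H₀ + V t₁)) := by
  simp_rw [← Ring.lie_def]
  rw [integral_lie_primitive_eq_neg_half_magnus H₀ hVcont hVavg, smul_smul]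
  congr 1
  ring

/-- let `T > 0`, `H₀ ∈ Mₙ(ℂ)`, and `V : ℝ → Mₙ(ℂ)` continuous with
`∫_0^T V = 0`. With `W(t) = ∫_0^t V(s) ds`, one has
`(i/T) ∫_0^T [W(t), H₀ + V(t)/2] dt
  = (−i/(2T)) ∫_0^T ∫_0^{t₁} [H₀ + V(t₁), H₀ + V(t₂)] dt₂ dt₁`:
the time average of the first-order correction coincides with the second-order Magnus
term. -/
theorem first_order_average_eq_magnus_second_order {n : ℕ} (T : ℝ) (hT : 0 < T)
    (H₀ : Matrix (Fin n) (Fin n) ℂ) (V : ℝ → Matrix (Fin n) (Fin n) ℂ)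
    (hVcont : Continuous V) (hVavg : ∫ t in (0:ℝ)..T, V t = 0) :
    ((Complex.I / (T : ℂ)) •
        ∫ t in (0:ℝ)..T,
          ((∫ s in (0:ℝ)..t, V s) * (H₀ + (1 / 2 : ℂ) • V t) -
            (H₀ + (1 / 2 : ℂ) • V t) * ∫ s in (0:ℝ)..t, V s)) =
      (-Complex.I / (2 * (T : ℂ))) •
        ∫ t₁ in (0:ℝ)..T, ∫ t₂ in (0:ℝ)..t₁,
          ((H₀ + V t₁) * (H₀ + V t₂) - (H₀ + V t₂) * (H₀ + V t₁)) :=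
  first_order_average_eq_magnus_second_order_general T H₀ V hVcont hVavg
end
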